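/- arXiv:1902.07533 — 8 statements merged into one kernel-verified Lean document; each statement's English description precedes it below -/
import Mathlib

section
/- Let K be the finite field F_2[x]/⟨f(x)⟩ where f is a self-reciprocal irreducible polynomial over F_2 of even degree d dividing x^n - 1 for odd n. Then for every a(x) in K, a(x^{-1}) ≡ a(x)^{2^{d/2}} (mod f(x)). -/
/-!
Let `r` be the root of `f` in `K = F_2[x]/⟨f⟩`. Since `f` is self-reciprocal, `r⁻¹` is again a root
of `f`, so `r ↦ r⁻¹` extends to an automorphism `σ` of `K` with `σ² = 1`. The Galois group of
`K / F_2` is cyclic of order `d`, generated by Frobenius `y ↦ y²`; its only nontrivial involution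
is the `d/2`-th power of Frobenius, whence `a(r⁻¹) = σ (a(r)) = a(r)^(2^(d/2))`. Finally
`r^(n-1) = r⁻¹` because `r^n = 1`.
-/

open Polynomial

theorem Polynomial.aeval_inv_eq_zero_of_reverse_eq {R L : Type*} [CommSemiring R] [Field L]
    [Algebra R L] {f : R[X]} (hf : f.reverse = f) {x : L} (hx : aeval x f = 0) :
    aeval x⁻¹ f = 0 := by
  rcases eq_or_ne x 0 with rfl | hx0
  · rwa [inv_zero]
  · have : Invertible x := invertibleOfNonzero hx0
    rw [aeval_def, ← invOf_eq_inv, ← hf]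
    exact (eval₂_reverse_eq_zero_iff _ x f).2 hx

theorem FiniteField.eq_frobeniusAlgEquivOfAlgebraic_pow_finrank_div_two {K L : Type*} [Field K]
    [Fintype K] [Field L] [Finite L] [Algebra K L] {σ : L ≃ₐ[K] L} (hσ : σ * σ = 1)
    (hσ1 : σ ≠ 1) :
    σ = frobeniusAlgEquivOfAlgebraic K L ^ (Module.finrank K L / 2) := by
  obtain ⟨⟨j, hjd⟩, rfl⟩ := (bijective_frobeniusAlgEquivOfAlgebraic_pow K L).2 σ
  have hj0 : j ≠ 0 := by
    rintro rfl
    exact hσ1 (pow_zero _)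
  obtain ⟨c, hc⟩ : Module.finrank K L ∣ j + j := by
    rw [← orderOf_frobeniusAlgEquivOfAlgebraic]
    exact orderOf_dvd_of_pow_eq_one (by rwa [pow_add])
  obtain rfl : c = 1 := by
    rcases c with _ | _ | c <;> [omega; rfl; nlinarith]
  dsimp only
  congr 1
  omega

namespace AdjoinRoot

variable {K : Type*} [Field K] {f : K[X]}

theorem natDegree_le_one_of_root_eq_of {c : K} (h : root f = of f c) : f.natDegree ≤ 1 := by
  have hdvd : f ∣ X - C c := mk_eq_zero.1 (by simp [h])
  simpa using natDegree_le_of_dvd hdvd (X_sub_C_ne_zero c)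

variable [Fact (Irreducible f)]

theorem root_pow_sub_one_eq_inv {n : ℕ} (hn : n ≠ 0) (h : f ∣ X ^ n - 1) :
    root f ^ (n - 1) = (root f)⁻¹ := by
  have hroot : root f ^ n = 1 := by simpa [sub_eq_zero] using mk_eq_zero.2 h
  exact (inv_eq_of_mul_eq_one_right <| by rw [mul_pow_sub_one hn, hroot]).symm

noncomputable def invRootAlgHom (hf : f.reverse = f) : AdjoinRoot f →ₐ[K] AdjoinRoot f :=
  liftAlgHom f (Algebra.ofId K _) (root f)⁻¹ <|
    aeval_inv_eq_zero_of_reverse_eq hf (aeval_eq f ▸ mk_self)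

theorem invRootAlgHom_root (hf : f.reverse = f) : invRootAlgHom hf (root f) = (root f)⁻¹ :=
  liftAlgHom_root ..

theorem invRootAlgHom_comp_self (hf : f.reverse = f) :
    (invRootAlgHom hf).comp (invRootAlgHom hf) = AlgHom.id K _ :=
  algHom_ext <| by simp [invRootAlgHom_root, map_inv₀]

noncomputable def invRootAlgEquiv (hf : f.reverse = f) : AdjoinRoot f ≃ₐ[K] AdjoinRoot f :=
  .ofAlgHom _ _ (invRootAlgHom_comp_self hf) (invRootAlgHom_comp_self hf)

theorem invRootAlgEquiv_root (hf : f.reverse = f) : invRootAlgEquiv hf (root f) = (root f)⁻¹ :=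
  invRootAlgHom_root hf

theorem invRootAlgEquiv_mul_self (hf : f.reverse = f) :
    invRootAlgEquiv hf * invRootAlgEquiv hf = 1 :=
  AlgEquiv.ext <| AlgHom.ext_iff.1 (invRootAlgHom_comp_self hf)

theorem natDegree_le_one_of_invRootAlgEquiv_eq_one (hf : f.reverse = f)
    (h : invRootAlgEquiv hf = 1) : f.natDegree ≤ 1 := by
  have hroot : (root f)⁻¹ = root f := by
    rw [← invRootAlgEquiv_root hf, h, AlgEquiv.one_apply]
  rcases inv_eq_self₀.1 hroot with h | h | h
  · exact natDegree_le_one_of_root_eq_of (c := -1) (by simp [h])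
  · exact natDegree_le_one_of_root_eq_of (c := 0) (by simp [h])
  · exact natDegree_le_one_of_root_eq_of (c := 1) (by simp [h])

open FiniteField in
theorem aeval_root_inv_eq_pow [Fintype K] (hf : f.reverse = f) (a : K[X]) :
    aeval (root f)⁻¹ a = aeval (root f) a ^ Fintype.card K ^ (f.natDegree / 2) := by
  have : Module.Finite K (AdjoinRoot f) := (powerBasis (Fact.out : Irreducible f).ne_zero).finite
  have : Finite (AdjoinRoot f) := Module.finite_of_finite K
  have hd : Module.finrank K (AdjoinRoot f) = f.natDegree := finrank_quotient_span_eq_natDegree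
  have hσ : invRootAlgEquiv hf =
      frobeniusAlgEquivOfAlgebraic K (AdjoinRoot f) ^ (f.natDegree / 2) := by
    by_cases h : invRootAlgEquiv hf = 1
    · have := natDegree_le_one_of_invRootAlgEquiv_eq_one hf h
      rw [h, Nat.div_eq_of_lt (by omega), pow_zero]
    · exact hd ▸
        eq_frobeniusAlgEquivOfAlgebraic_pow_finrank_div_two (invRootAlgEquiv_mul_self hf) h
  rw [← invRootAlgEquiv_root hf, aeval_algHom_apply, hσ, AlgEquiv.coe_pow,
    coe_frobeniusAlgEquivOfAlgebraic_iterate]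

end AdjoinRoot

theorem stmt_2_general (n : ℕ) (hn0 : 0 < n) (f : Polynomial (ZMod 2))
    (hirr : Irreducible f)
    (hself : f.reverse = f) (hdvd : f ∣ X ^ n - 1) (a : Polynomial (ZMod 2)) :
    Polynomial.aeval ((Ideal.Quotient.mk (Ideal.span {f}) X) ^ (n - 1)) a
      = (Polynomial.aeval (Ideal.Quotient.mk (Ideal.span {f}) X) a) ^ (2 ^ (f.natDegree / 2)) := by
  have : Fact (Irreducible f) := ⟨hirr⟩
  have key := AdjoinRoot.aeval_root_inv_eq_pow hself a
  rw [← AdjoinRoot.root_pow_sub_one_eq_inv hn0.ne' hdvd, ZMod.card] at key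
  exact key

/-- Let `K = F_2[x]/⟨f⟩` where `f` is a self-reciprocal irreducible polynomial over `F_2`
of even degree `d` dividing `x^n - 1` for odd `n`.  Then for every polynomial `a`,
`a(x⁻¹) = a(x)^(2^(d/2))` in `K`, where `x⁻¹ = x^(n-1)`. -/
theorem stmt_2 (n : ℕ) (hn : Odd n) (hn0 : 0 < n) (f : Polynomial (ZMod 2))
    (hirr : Irreducible f) (hd : 2 ≤ f.natDegree) (hdeven : Even f.natDegree)
    (hself : f.reverse = f) (hdvd : f ∣ X ^ n - 1) (a : Polynomial (ZMod 2)) :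
    Polynomial.aeval ((Ideal.Quotient.mk (Ideal.span {f}) X) ^ (n - 1)) a
      = (Polynomial.aeval (Ideal.Quotient.mk (Ideal.span {f}) X) a) ^ (2 ^ (f.natDegree / 2)) :=
  stmt_2_general n hn0 f hirr hself hdvd a
end

section
/- Let K be the finite field F_2[x]/⟨f(x)⟩ where f is a self-reciprocal irreducible polynomial over F_2 of even degree d dividing x^n - 1 for odd n. Then the number of elements a in K with a · σ(a) = 1, where σ(a(x)) = a(x^{-1}), is exactly 2^{d/2} + 1. -/
/-!
Because `f` is self-reciprocal, `x ↦ x⁻¹` extends to an involutive automorphism `σ` of the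
field `K = 𝔽₂[x]/(f)`, and `σ ≠ 1` since `x = x⁻¹` would force `deg f ≤ 1`. The Galois group
of `K/𝔽₂` is cyclic of order `d`, generated by Frobenius, so its only involution is
`a ↦ a ^ q` with `q = 2 ^ (d/2)`. Hence `a σ(a) = a ^ (q + 1)`, and in the cyclic group `Kˣ`
of order `q² - 1`, a multiple of `q + 1`, the equation `a ^ (q + 1) = 1` has exactly `q + 1`
solutions.
-/

open Polynomial

namespace FiniteField

theorem natCard_pow_eq_one_of_dvd {L : Type*} [Field L] [Fintype L] {k : ℕ}
    (hk : k ∣ Fintype.card L - 1) : Nat.card {a : L // a ^ k = 1} = k := by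
  classical
  have hk0 : 0 < k := Nat.pos_of_dvd_of_pos hk (by have := Fintype.one_lt_card (α := L); omega)
  obtain ⟨u, hu⟩ : ∃ u : Lˣ, orderOf u = k := by
    have hcard :=
      IsCyclic.card_orderOf_eq_totient (α := Lˣ) (d := k) (by rwa [Fintype.card_units])
    obtain ⟨u, hu⟩ := Finset.card_pos.mp (hcard ▸ Nat.totient_pos.mpr hk0)
    exact ⟨u, (Finset.mem_filter.mp hu).2⟩
  have hζ : IsPrimitiveRoot (u : L) k := IsPrimitiveRoot.coe_units_iff.mpr (hu ▸ .orderOf u)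
  calc Nat.card {a : L // a ^ k = 1} = Nat.card (nthRootsFinset k (1 : L)) :=
        Nat.card_congr (Equiv.subtypeEquivRight fun a ↦ (mem_nthRootsFinset hk0 1).symm)
    _ = k := by rw [Nat.card_eq_finsetCard, hζ.card_nthRootsFinset]

theorem algEquiv_apply_eq_pow_of_mul_self_eq_one {K L : Type*} [Field K] [Fintype K] [Field L]
    [Finite L] [Algebra K L] {m : ℕ} (hm : Module.finrank K L = 2 * m) {σ : Gal(L/K)}
    (hσ : σ * σ = 1) (hσ1 : σ ≠ 1) (a : L) : σ a = a ^ Fintype.card K ^ m := by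
  obtain ⟨⟨k, hk⟩, rfl⟩ := (bijective_frobeniusAlgEquivOfAlgebraic_pow K L).2 σ
  have hkm : k = m := by
    have h2k : 2 * m ∣ 2 * k := by
      rw [← hm, ← orderOf_frobeniusAlgEquivOfAlgebraic, orderOf_dvd_iff_pow_eq_one, two_mul,
        pow_add]
      exact hσ
    have hk0 : k ≠ 0 := by rintro rfl; exact hσ1 (pow_zero _)
    obtain ⟨c, rfl⟩ := Nat.dvd_of_mul_dvd_mul_left two_pos h2k
    rcases c with _ | _ | c
    · simp at hk0
    · simp
    · nlinarith
  subst hkm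
  rw [AlgEquiv.coe_pow, coe_frobeniusAlgEquivOfAlgebraic_iterate]

end FiniteField

namespace AdjoinRoot

theorem root_pow_eq_one_of_dvd {R : Type*} [CommRing R] {f : R[X]} {n : ℕ}
    (h : f ∣ X ^ n - 1) : root f ^ n = 1 := by
  rwa [← sub_eq_zero, ← mk_X, ← map_pow, ← map_one (mk f), ← map_sub, mk_eq_zero]

variable {K : Type*} [Field K] {f : K[X]}

theorem root_ne_algebraMap (hf : 2 ≤ f.natDegree) (c : K) : root f ≠ algebraMap K _ c := by
  intro h
  have hdvd : f ∣ X - C c := by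
    rw [← mk_eq_zero, map_sub, mk_X, mk_C, h]
    exact sub_self _
  have := natDegree_le_of_dvd hdvd (X_sub_C_ne_zero c)
  rw [natDegree_X_sub_C] at this
  omega

variable [Fact (Irreducible f)]

theorem root_ne_zero_of_reverse_eq (hf : f.reverse = f) : root f ≠ 0 := by
  intro h
  have : aeval (root f) f = 0 := aeval_eq f ▸ mk_self
  rw [h, ← coeff_zero_eq_aeval_zero', map_eq_zero, ← hf, coeff_zero_reverse,
    leadingCoeff_eq_zero] at this
  exact (Fact.out : Irreducible f).ne_zero this

theorem aeval_root_inv_of_reverse_eq (hf : f.reverse = f) : aeval (root f)⁻¹ f = 0 := by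
  have := invertibleOfNonzero (root_ne_zero_of_reverse_eq hf)
  have h := (eval₂_reverse_eq_zero_iff (algebraMap K (AdjoinRoot f)) (root f) f).mpr
    (by rw [← aeval_def, aeval_eq, mk_self])
  rwa [hf, ← aeval_def, invOf_eq_inv] at h

noncomputable def reciprocalAlgHom (hf : f.reverse = f) : AdjoinRoot f →ₐ[K] AdjoinRoot f :=
  liftAlgHom f (Algebra.ofId K _) (root f)⁻¹ (aeval_root_inv_of_reverse_eq hf)

theorem reciprocalAlgHom_mk (hf : f.reverse = f) (p : K[X]) :
    reciprocalAlgHom hf (mk f p) = aeval (root f)⁻¹ p :=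
  liftAlgHom_mk ..

theorem reciprocalAlgHom_root (hf : f.reverse = f) : reciprocalAlgHom hf (root f) = (root f)⁻¹ :=
  liftAlgHom_root ..

theorem reciprocalAlgHom_comp_self (hf : f.reverse = f) :
    (reciprocalAlgHom hf).comp (reciprocalAlgHom hf) = AlgHom.id K _ :=
  algHom_ext <| by
    rw [AlgHom.comp_apply, reciprocalAlgHom_root, map_inv₀, reciprocalAlgHom_root, inv_inv,
      AlgHom.id_apply]

noncomputable def reciprocalAlgEquiv (hf : f.reverse = f) : AdjoinRoot f ≃ₐ[K] AdjoinRoot f :=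
  .ofAlgHom _ _ (reciprocalAlgHom_comp_self hf) (reciprocalAlgHom_comp_self hf)

theorem exists_mk_mul_aeval_root_inv_eq_one_iff (hf : f.reverse = f) (a : AdjoinRoot f) :
    (∃ p, mk f p = a ∧ a * aeval (root f)⁻¹ p = 1) ↔ a * reciprocalAlgHom hf a = 1 := by
  constructor
  · rintro ⟨p, rfl, h⟩
    rwa [reciprocalAlgHom_mk]
  · intro h
    obtain ⟨p, rfl⟩ := mk_surjective a
    exact ⟨p, rfl, by rwa [← reciprocalAlgHom_mk]⟩

@[simp]
theorem reciprocalAlgEquiv_apply (hf : f.reverse = f) (a : AdjoinRoot f) :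
    reciprocalAlgEquiv hf a = reciprocalAlgHom hf a :=
  rfl

theorem reciprocalAlgEquiv_mul_self (hf : f.reverse = f) :
    reciprocalAlgEquiv hf * reciprocalAlgEquiv hf = 1 :=
  AlgEquiv.ext fun a ↦ AlgHom.congr_fun (reciprocalAlgHom_comp_self hf) a

theorem reciprocalAlgEquiv_ne_one (hf : f.reverse = f) (hd : 2 ≤ f.natDegree) :
    reciprocalAlgEquiv hf ≠ 1 := by
  intro h
  have hinv : (root f)⁻¹ = root f := by
    simpa [reciprocalAlgHom_root] using AlgEquiv.congr_fun h (root f)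
  have hsq : root f * root f = 1 := by
    nth_rw 1 [← hinv]
    exact inv_mul_cancel₀ (root_ne_zero_of_reverse_eq hf)
  rcases mul_self_eq_one_iff.mp hsq with h1 | h1
  · exact root_ne_algebraMap hd 1 (by rw [h1, map_one])
  · exact root_ne_algebraMap hd (-1) (by rw [h1, map_neg, map_one])

end AdjoinRoot

open AdjoinRoot

theorem stmt_3_general (n : ℕ) (hn0 : 0 < n) (f : Polynomial (ZMod 2))
    (hirr : Irreducible f) (hd : 2 ≤ f.natDegree) (hdeven : Even f.natDegree)
    (hself : f.reverse = f) (hdvd : f ∣ X ^ n - 1) :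
    Nat.card {a : Polynomial (ZMod 2) ⧸ Ideal.span {f} //
      ∃ p : Polynomial (ZMod 2), Ideal.Quotient.mk (Ideal.span {f}) p = a ∧
        a * Polynomial.aeval ((Ideal.Quotient.mk (Ideal.span {f}) X) ^ (n - 1)) p = 1}
      = 2 ^ (f.natDegree / 2) + 1 := by
  have := Fact.mk hirr
  let pb := powerBasis hirr.ne_zero
  have := pb.finite
  have : Finite (AdjoinRoot f) := Module.finite_of_finite (ZMod 2)
  have := Fintype.ofFinite (AdjoinRoot f)
  set q := 2 ^ (f.natDegree / 2)
  have hrank : Module.finrank (ZMod 2) (AdjoinRoot f) = 2 * (f.natDegree / 2) := by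
    rw [pb.finrank, powerBasis_dim, Nat.two_mul_div_two_of_even hdeven]
  have hcard : Fintype.card (AdjoinRoot f) = q ^ 2 := by
    rw [Module.card_eq_pow_finrank (K := ZMod 2), ZMod.card, hrank, pow_mul, pow_right_comm]
  have hσ (a : AdjoinRoot f) : reciprocalAlgHom hself a = a ^ q := by
    simpa [ZMod.card] using FiniteField.algEquiv_apply_eq_pow_of_mul_self_eq_one hrank
      (reciprocalAlgEquiv_mul_self hself) (reciprocalAlgEquiv_ne_one hself hd) a
  have hroot : root f ^ (n - 1) = (root f)⁻¹ :=
    eq_inv_of_mul_eq_one_left <| by rw [pow_sub_one_mul hn0.ne', root_pow_eq_one_of_dvd hdvd]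
  calc _ = Nat.card {a : AdjoinRoot f // a ^ (q + 1) = 1} :=
        Nat.card_congr <| .subtypeEquivRight fun a ↦ by
          change (∃ p, mk f p = a ∧ a * aeval (root f ^ (n - 1)) p = 1) ↔ _
          rw [hroot, exists_mk_mul_aeval_root_inv_eq_one_iff hself, hσ, pow_succ']
    _ = q + 1 := FiniteField.natCard_pow_eq_one_of_dvd <| by
      rw [hcard, ← one_pow 2, Nat.sq_sub_sq]
      exact dvd_mul_right _ _

/-- Let `K = F_2[x]/⟨f⟩` where `f` is a self-reciprocal irreducible polynomial over `F_2`
of even degree `d` dividing `x^n - 1` for odd `n`.  The number of elements `a ∈ K` with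
`a · σ(a) = 1`, where `σ(a(x)) = a(x⁻¹)` and `x⁻¹ = x^(n-1)`, is exactly `2^(d/2) + 1`. -/
theorem stmt_3 (n : ℕ) (hn : Odd n) (hn0 : 0 < n) (f : Polynomial (ZMod 2))
    (hirr : Irreducible f) (hd : 2 ≤ f.natDegree) (hdeven : Even f.natDegree)
    (hself : f.reverse = f) (hdvd : f ∣ X ^ n - 1) :
    Nat.card {a : Polynomial (ZMod 2) ⧸ Ideal.span {f} //
      ∃ p : Polynomial (ZMod 2), Ideal.Quotient.mk (Ideal.span {f}) p = a ∧
        a * Polynomial.aeval ((Ideal.Quotient.mk (Ideal.span {f}) X) ^ (n - 1)) p = 1}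
      = 2 ^ (f.natDegree / 2) + 1 :=
  stmt_3_general n hn0 f hirr hd hdeven hself hdvd
end

section
/- Let λ ≥ 1, A_0 = F_2[x]/⟨(x+1)^{2^λ}⟩, and for 2 ≤ s ≤ 2^λ let W^{(s)} = {a(x) ∈ F_2[x]/⟨(x+1)^s⟩ : a(x)a(x^{-1}) ≡ 1 (mod (x+1)^s)}, where x^{-1} = x^{2^λ - 1}. Suppose a(x) ∈ W^{(s-1)} and (x+1)^{s-1} exactly computes b ≡ (a(x)a(x^{2^λ-1}) - 1)/(x+1)^{s-1} (mod x+1) with b = 0 in F_2. Then both a(x) and a(x) + (x+1)^{s-1} belong to W^{(s)}. -/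
open Polynomial

/-!
Write `σ p = p.comp (X ^ n)` with `n = 2 ^ λ - 1` odd and `c = (X + 1) ^ k`, `k = s - 1`. Then
`(a + c) σ(a + c) - 1 = (a σa - 1) + (a σc + c σa) + c σc`, and `b = 0` says exactly that
`(X + 1) ^ (k + 1)` divides the first summand.
In characteristic 2, `σ(X + 1) = X ^ n + 1 = (X + 1) v` with `v = 1 + X + ⋯ + X ^ (n - 1)` and
`v(1) = n = 1`, so `a σc + c σa = (X + 1) ^ k (a v ^ k + σa)`, whose second factor takes the value
`2 a(1) = 0` at `1`. Finally `c σc` is divisible by `(X + 1) ^ (2k)` and `2k ≥ k + 1`.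
-/

section CharTwo

variable {R : Type*} [CommRing R] [CharP R 2]

theorem X_add_one_dvd_iff_eval_one_eq_zero {p : R[X]} : X + 1 ∣ p ↔ p.eval 1 = 0 := by
  rw [← CharTwo.sub_eq_add, ← C_1, dvd_iff_isRoot, IsRoot.def]

theorem X_pow_add_one_eq_mul_geom_sum (n : ℕ) :
    (X ^ n + 1 : R[X]) = (X + 1) * ∑ i ∈ Finset.range n, X ^ i := by
  rw [← CharTwo.sub_eq_add, ← CharTwo.sub_eq_add, mul_geom_sum]

theorem X_add_one_dvd_comp_X_pow (n : ℕ) : (X + 1 : R[X]) ∣ (X + 1).comp (X ^ n) := by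
  rw [add_comp, X_comp, one_comp, X_pow_add_one_eq_mul_geom_sum]
  exact dvd_mul_right _ _

theorem X_add_one_pow_succ_dvd_mul_comp {k : ℕ} (hk : 1 ≤ k) (n : ℕ) :
    (X + 1 : R[X]) ^ (k + 1) ∣ (X + 1) ^ k * ((X + 1) ^ k).comp (X ^ n) := by
  have hσ : (X + 1 : R[X]) ^ k ∣ ((X + 1) ^ k).comp (X ^ n) := by
    rw [pow_comp]
    exact pow_dvd_pow_of_dvd (X_add_one_dvd_comp_X_pow n) k
  calc (X + 1 : R[X]) ^ (k + 1) ∣ (X + 1) ^ (k + k) := pow_dvd_pow _ (by omega)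
    _ = (X + 1) ^ k * (X + 1) ^ k := pow_add _ _ _
    _ ∣ (X + 1) ^ k * ((X + 1) ^ k).comp (X ^ n) := mul_dvd_mul_left _ hσ

theorem X_add_one_pow_succ_dvd_cross_term {n : ℕ} (hn : Odd n) (a : R[X]) (k : ℕ) :
    (X + 1 : R[X]) ^ (k + 1) ∣ a * ((X + 1) ^ k).comp (X ^ n) + (X + 1) ^ k * a.comp (X ^ n) := by
  obtain ⟨v, hXn, hv⟩ : ∃ v : R[X], X ^ n + 1 = (X + 1) * v ∧ v.eval 1 = 1 := by
    refine ⟨_, X_pow_add_one_eq_mul_geom_sum n, ?_⟩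
    simp only [eval_geom_sum, one_pow, Finset.sum_const, Finset.card_range, nsmul_eq_mul, mul_one]
    rw [CharP.cast_eq_mod R 2, Nat.odd_iff.mp hn, Nat.cast_one]
  have hsplit : a * ((X + 1) ^ k).comp (X ^ n) + (X + 1) ^ k * a.comp (X ^ n)
      = (X + 1) ^ k * (a * v ^ k + a.comp (X ^ n)) := by
    rw [pow_comp, add_comp, X_comp, one_comp, hXn, mul_pow]
    ring
  rw [hsplit, pow_succ]
  refine mul_dvd_mul_left _ (X_add_one_dvd_iff_eval_one_eq_zero.mpr ?_)
  rw [eval_add, eval_mul, eval_pow, hv, one_pow, mul_one, eval_comp, eval_pow, eval_X, one_pow,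
    CharTwo.add_self_eq_zero]

theorem X_add_one_pow_succ_dvd_add_mul_comp_sub_one {n k : ℕ} (hn : Odd n) (hk : 1 ≤ k)
    {a : R[X]} (ha : (X + 1) ^ (k + 1) ∣ a * a.comp (X ^ n) - 1) :
    (X + 1) ^ (k + 1) ∣ (a + (X + 1) ^ k) * (a + (X + 1) ^ k).comp (X ^ n) - 1 := by
  have hexpand : (a + (X + 1) ^ k) * (a + (X + 1) ^ k).comp (X ^ n) - 1
      = (a * a.comp (X ^ n) - 1)
        + (a * ((X + 1) ^ k).comp (X ^ n) + (X + 1) ^ k * a.comp (X ^ n))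
        + (X + 1) ^ k * ((X + 1) ^ k).comp (X ^ n) := by
    rw [add_comp]
    ring
  rw [hexpand]
  exact dvd_add (dvd_add ha (X_add_one_pow_succ_dvd_cross_term hn a k))
    (X_add_one_pow_succ_dvd_mul_comp hk n)

end CharTwo

theorem stmt_9_general (l s : ℕ) (hl : 1 ≤ l) (hs2 : 2 ≤ s)
    (a q : Polynomial (ZMod 2))
    (hq : a * a.comp (X ^ (2 ^ l - 1)) - 1 = q * (X + 1) ^ (s - 1))
    (hb0 : (X + 1 : Polynomial (ZMod 2)) ∣ q) :
    ((X + 1 : Polynomial (ZMod 2)) ^ s ∣ a * a.comp (X ^ (2 ^ l - 1)) - 1) ∧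
    ((X + 1 : Polynomial (ZMod 2)) ^ s ∣
      (a + (X + 1) ^ (s - 1)) * (a + (X + 1) ^ (s - 1)).comp (X ^ (2 ^ l - 1)) - 1) := by
  obtain ⟨k, rfl⟩ : ∃ k, s = k + 1 := ⟨s - 1, by omega⟩
  rw [Nat.add_sub_cancel] at hq ⊢
  have hodd : Odd (2 ^ l - 1) :=
    Nat.Even.sub_odd (Nat.one_le_two_pow) (Nat.even_pow.mpr ⟨even_two, by omega⟩) odd_one
  have hlift : (X + 1 : Polynomial (ZMod 2)) ^ (k + 1) ∣ a * a.comp (X ^ (2 ^ l - 1)) - 1 := by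
    rw [hq, pow_succ']
    exact mul_dvd_mul_right hb0 _
  exact ⟨hlift, X_add_one_pow_succ_dvd_add_mul_comp_sub_one hodd (by omega) hlift⟩

/-- Recursive step (case `b = 0`) for computing `W^(s)`: let `λ ≥ 1`, `2 ≤ s ≤ 2^λ`,
and let `a` satisfy `a(x)a(x^(2^λ-1)) ≡ 1 (mod (x+1)^(s-1))`, with quotient
`q = (a(x)a(x^(2^λ-1)) - 1)/(x+1)^(s-1)` satisfying `q ≡ 0 (mod x+1)`.  Then both `a(x)`
and `a(x) + (x+1)^(s-1)` belong to `W^(s)`, i.e. satisfy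
`a(x)a(x^(2^λ-1)) ≡ 1 (mod (x+1)^s)`. -/
theorem stmt_9 (l s : ℕ) (hl : 1 ≤ l) (hs2 : 2 ≤ s) (hs : s ≤ 2 ^ l)
    (a q : Polynomial (ZMod 2))
    (hq : a * a.comp (X ^ (2 ^ l - 1)) - 1 = q * (X + 1) ^ (s - 1))
    (hb0 : (X + 1 : Polynomial (ZMod 2)) ∣ q) :
    ((X + 1 : Polynomial (ZMod 2)) ^ s ∣ a * a.comp (X ^ (2 ^ l - 1)) - 1) ∧
    ((X + 1 : Polynomial (ZMod 2)) ^ s ∣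
      (a + (X + 1) ^ (s - 1)) * (a + (X + 1) ^ (s - 1)).comp (X ^ (2 ^ l - 1)) - 1) :=
  stmt_9_general l s hl hs2 a q hq hb0
end

section
/- Let λ ≥ 1, A_0 = F_2[x]/⟨(x+1)^{2^λ}⟩, and for 2 ≤ s ≤ 2^λ define W^{(s)} as the set of a(x) mod (x+1)^s with a(x)a(x^{2^λ-1}) ≡ 1 (mod (x+1)^s). If a(x) ∈ W^{(s-1)} and the quotient (a(x)a(x^{2^λ-1}) - 1)/(x+1)^{s-1} is ≡ 1 (mod x+1), then neither a(x) nor a(x)+(x+1)^{s-1} belongs to W^{(s)}. -/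
/-!
Write `N(a) = a(x) a(x^m)` with `m = 2^λ - 1` and `h = (x+1)^(s-1)`. The first claim is immediate:
`N(a) - 1 = q (x+1)^(s-1)` and `x+1 ∤ q`. For the second, `m` is odd, so in characteristic two
`x^m + 1 ≡ x + 1 (mod (x+1)^2)`, whence `h(x^m) ≡ h (mod (x+1)^s)`. Together with `h^2 ≡ 0` this gives
`N(a + h) - N(a) ≡ h (a(x) + a(x^m))`, and `a(x) + a(x^m)` vanishes at `x = 1`. Hence
`N(a + h) ≡ N(a) (mod (x+1)^s)` and the second claim reduces to the first.
-/

open Polynomial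

theorem not_pow_succ_dvd_mul_pow {R : Type*} [CommRing R] [IsDomain R] {p q : R}
    (hp0 : p ≠ 0) (hp : ¬IsUnit p) (hq : p ∣ q - 1) (n : ℕ) : ¬p ^ (n + 1) ∣ q * p ^ n := by
  intro h
  rw [pow_succ, mul_comm q, mul_dvd_mul_iff_left (pow_ne_zero n hp0)] at h
  exact hp (isUnit_of_dvd_one (by simpa using dvd_sub h hq))

namespace CharTwo

variable {R : Type*} [CommRing R] [CharP R 2]

theorem X_add_one_dvd_iff_eval_one {p : R[X]} : (X + 1 : R[X]) ∣ p ↔ p.eval 1 = 0 := by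
  rw [← C_1, ← CharTwo.sub_eq_add, dvd_iff_isRoot, IsRoot.def]

theorem X_add_one_dvd_add_comp (a : R[X]) (m : ℕ) : (X + 1 : R[X]) ∣ a + a.comp (X ^ m) := by
  rw [X_add_one_dvd_iff_eval_one, eval_add, eval_comp, eval_pow, eval_X, one_pow,
    ← two_mul, CharTwo.two_eq_zero, zero_mul]

theorem X_add_one_dvd_X_pow_add_one (k : ℕ) : (X + 1 : R[X]) ∣ X ^ k + 1 := by
  simpa only [one_pow, CharTwo.sub_eq_add] using sub_dvd_pow_sub_pow (X : R[X]) 1 k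

theorem X_add_one_sq_dvd_X_pow_add_X {m : ℕ} (hm : Odd m) : (X + 1 : R[X]) ^ 2 ∣ X ^ m + X := by
  obtain ⟨k, rfl⟩ := hm
  have hsq : (X : R[X]) ^ (2 * k + 1) + X = X * (X ^ k + 1) ^ 2 := by
    rw [CharTwo.add_sq]; ring
  rw [hsq]
  exact Dvd.dvd.mul_left (pow_dvd_pow_of_dvd (X_add_one_dvd_X_pow_add_one k) 2) _

theorem X_add_one_pow_succ_dvd_comp_sub {m : ℕ} (hm : Odd m) (n : ℕ) :
    (X + 1 : R[X]) ^ (n + 1) ∣ ((X + 1) ^ n).comp (X ^ m) - (X + 1) ^ n := by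
  obtain ⟨v, hv⟩ := X_add_one_sq_dvd_X_pow_add_X (R := R) hm
  set u : R[X] := 1 + (X + 1) * v
  have hu : (X : R[X]) ^ m + 1 = (X + 1) * u := by
    linear_combination hv - CharTwo.add_self_eq_zero (X : R[X])
  have hdiff : ((X + 1 : R[X]) ^ n).comp (X ^ m) - (X + 1) ^ n = (X + 1) ^ n * (u ^ n - 1 ^ n) := by
    rw [pow_comp, add_comp, X_comp, one_comp, hu, mul_pow]; ring
  rw [hdiff, pow_succ]
  exact mul_dvd_mul_left _ <| (dvd_mul_right _ v).trans <| by
    simpa only [u, add_sub_cancel_left] using sub_dvd_pow_sub_pow u 1 n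

theorem X_add_one_pow_succ_dvd_norm_add_sub {m n : ℕ} (hm : Odd m) (hn : 1 ≤ n) (a : R[X]) :
    (X + 1 : R[X]) ^ (n + 1) ∣
      (a + (X + 1) ^ n) * (a + (X + 1) ^ n).comp (X ^ m) - a * a.comp (X ^ m) := by
  set h : R[X] := (X + 1) ^ n
  obtain ⟨w, hw⟩ := X_add_one_pow_succ_dvd_comp_sub (R := R) hm n
  have hcomp : h.comp (X ^ m) = h + (X + 1) ^ (n + 1) * w := by linear_combination hw
  have hexpand : (a + h) * (a + h).comp (X ^ m) - a * a.comp (X ^ m) =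
      h * (a + a.comp (X ^ m)) + h ^ 2 + (X + 1) ^ (n + 1) * (w * (a + h)) := by
    rw [add_comp, hcomp]; ring
  rw [hexpand]
  refine dvd_add (dvd_add ?_ ?_) (dvd_mul_right _ _)
  · rw [pow_succ]
    exact mul_dvd_mul_left _ (X_add_one_dvd_add_comp a m)
  · rw [← pow_mul]
    exact pow_dvd_pow _ (by omega)

end CharTwo

theorem stmt_10_general (l s : ℕ) (hl : 1 ≤ l) (hs2 : 2 ≤ s)
    (a q : Polynomial (ZMod 2))
    (hq : a * a.comp (X ^ (2 ^ l - 1)) - 1 = q * (X + 1) ^ (s - 1))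
    (hb1 : (X + 1 : Polynomial (ZMod 2)) ∣ q - 1) :
    ¬ ((X + 1 : Polynomial (ZMod 2)) ^ s ∣ a * a.comp (X ^ (2 ^ l - 1)) - 1) ∧
    ¬ ((X + 1 : Polynomial (ZMod 2)) ^ s ∣
      (a + (X + 1) ^ (s - 1)) * (a + (X + 1) ^ (s - 1)).comp (X ^ (2 ^ l - 1)) - 1) := by
  obtain ⟨n, rfl⟩ : ∃ n, s = n + 1 := ⟨s - 1, by omega⟩
  rw [Nat.add_sub_cancel] at hq ⊢
  have hodd : Odd (2 ^ l - 1) :=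
    Nat.Even.sub_odd Nat.one_le_two_pow (Nat.even_pow.mpr ⟨even_two, by omega⟩) odd_one
  have hnorm : ¬(X + 1 : (ZMod 2)[X]) ^ (n + 1) ∣ a * a.comp (X ^ (2 ^ l - 1)) - 1 := by
    rw [hq]
    exact not_pow_succ_dvd_mul_pow (X_add_C_ne_zero 1) (by simpa using not_isUnit_X_add_C (1 : ZMod 2))
      hb1 n
  refine ⟨hnorm, fun h => hnorm ?_⟩
  have hcong := CharTwo.X_add_one_pow_succ_dvd_norm_add_sub hodd (by omega : 1 ≤ n) a
  simpa using dvd_sub h hcong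

/-- Recursive step (case `b = 1`) for computing `W^(s)`: let `λ ≥ 1`, `2 ≤ s ≤ 2^λ`,
and let `a` satisfy `a(x)a(x^(2^λ-1)) ≡ 1 (mod (x+1)^(s-1))`, with quotient
`q = (a(x)a(x^(2^λ-1)) - 1)/(x+1)^(s-1)` satisfying `q ≡ 1 (mod x+1)`.  Then neither
`a(x)` nor `a(x) + (x+1)^(s-1)` belongs to `W^(s)`. -/
theorem stmt_10 (l s : ℕ) (hl : 1 ≤ l) (hs2 : 2 ≤ s) (hs : s ≤ 2 ^ l)
    (a q : Polynomial (ZMod 2))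
    (hq : a * a.comp (X ^ (2 ^ l - 1)) - 1 = q * (X + 1) ^ (s - 1))
    (hb1 : (X + 1 : Polynomial (ZMod 2)) ∣ q - 1) :
    ¬ ((X + 1 : Polynomial (ZMod 2)) ^ s ∣ a * a.comp (X ^ (2 ^ l - 1)) - 1) ∧
    ¬ ((X + 1 : Polynomial (ZMod 2)) ^ s ∣
      (a + (X + 1) ^ (s - 1)) * (a + (X + 1) ^ (s - 1)).comp (X ^ (2 ^ l - 1)) - 1) :=
  stmt_10_general l s hl hs2 a q hq hb1
end

section
/- Let f be a self-reciprocal irreducible polynomial over F_2 of even degree d dividing x^n - 1, n odd, let λ ≥ 1, N = 2^λ n, and for 1 ≤ s ≤ 2^λ let W^{(s)} = {a ∈ F_2[x]/⟨f(x)^s⟩ : a(x)a(x^{N-1}) ≡ 1 (mod f(x)^s)}. Then |W^{(s)}| = (2^{d/2}+1)·2^{(s-1)d/2}. -/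
/-!
Write `A_s = F₂[X] ⧸ (f ^ s)` and `x` for the class of `X`. As `f ^ s ∣ X ^ N - 1`, `x` is a unit
with inverse `x ^ (N - 1)`, and since `f` is self-reciprocal,
`f ^ s (x⁻¹) = x ^ (-d s) f ^ s (x) = 0`, so `x ↦ x⁻¹` defines an involutive automorphism
`a ↦ ā` of `A_s`; `W^(s)` is the set of `a` with `a ā = 1`.

On the residue field `K = A_1` of order `2 ^ d` the bar is an element of order two of the cyclic
group `Gal(K/F₂)` of order `d`, so `d = 2 i` and `ā = a ^ q` with `q = 2 ^ i`: `W^(1)` is the group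
of `(q + 1)`-th roots of unity of `K`, of order `q + 1` because `q + 1 ∣ q ^ 2 - 1`.

For `s ≥ 1`, the lifts to `A_(s+1)` of `b ∈ W^(s)` are the `a₀ + f ^ s T` with `T ∈ K`, and since
`(f ^ s) ^ 2 = 0` in `A_(s+1)`, the condition on `T` is an affine equation `α T + β T ^ q = c` over
`K`. Kernel and image of `T ↦ α T + β T ^ q` consist of roots of polynomials of degree `q`, so
both have exactly `q` elements, the image is the whole root set containing `c`, and `b` has exactly
`q` lifts.
-/

open Polynomial AdjoinRoot

theorem card_pow_eq_one_of_dvd_card_sub_one {K : Type*} [Field K] [Finite K] {m : ℕ}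
    (hm : m ∣ Nat.card K - 1) : Nat.card {a : K // a ^ m = 1} = m := by
  obtain ⟨g, hg⟩ := IsCyclic.exists_ofOrder_eq_natCard (α := Kˣ)
  rw [Nat.card_units] at hg
  obtain ⟨k, hk⟩ := hm
  have hk0 : k ≠ 0 := by rintro rfl; have := Finite.one_lt_card (α := K); omega
  have hgk : orderOf (g ^ k) = m := by
    rw [orderOf_pow_of_dvd hk0 ⟨m, by rw [hg, hk, mul_comm]⟩, hg, hk,
      Nat.mul_div_cancel _ (Nat.pos_of_ne_zero hk0)]
  have hζ : IsPrimitiveRoot ((g ^ k : Kˣ) : K) m :=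
    IsPrimitiveRoot.coe_units_iff.mpr (hgk ▸ IsPrimitiveRoot.orderOf _)
  calc Nat.card {a : K // a ^ m = 1} = Nat.card (nthRootsFinset m (1 : K)) :=
        Nat.card_congr (Equiv.subtypeEquivRight fun _ => (mem_nthRootsFinset
          (hgk ▸ orderOf_pos _) (1 : K)).symm)
    _ = m := by rw [Nat.card_eq_finsetCard, hζ.card_nthRootsFinset]

theorem AddMonoidHom.card_fiber_eq_of_card_ker_le {G H : Type*} [AddGroup G] [AddGroup H]
    [Finite G] [Finite H] (L : G →+ H) {a b : ℕ} (hG : Nat.card G = a * b)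
    (hker : Nat.card L.ker ≤ a) {S : Set H} (hLS : ∀ t, L t ∈ S) (hS : S.ncard ≤ b) {c : H}
    (hc : c ∈ S) : Nat.card {t // L t = c} = a := by
  have hsub : (L.range : Set H) ⊆ S := by rintro _ ⟨t, rfl⟩; exact hLS t
  have hrange : Nat.card L.range ≤ b :=
    (Nat.card_coe_set_eq (L.range : Set H)).trans_le ((Set.ncard_le_ncard hsub).trans hS)
  have hmul := L.ker.card_mul_index
  rw [AddSubgroup.index_ker, hG] at hmul
  have ha : 0 < a := Nat.pos_of_mul_pos_right (hG ▸ Nat.card_pos)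
  obtain ⟨hka, hrb⟩ :=
    (mul_eq_mul_iff_eq_and_eq_of_pos' hker hrange ha Nat.card_pos).mp hmul
  have hrS : (L.range : Set H) = S := Set.eq_of_subset_of_ncard_le hsub
    (by rw [← Nat.card_coe_set_eq]; exact hS.trans hrb.ge)
  obtain ⟨t₀, rfl⟩ : c ∈ L.range := by rw [← SetLike.mem_coe, hrS]; exact hc
  rw [← hka]
  exact Nat.card_congr (Equiv.subtypeEquiv (Equiv.subRight t₀) fun t => by simp [sub_eq_zero])

theorem ncard_setOf_mul_pow_add_mul_eq_zero_le {K : Type*} [Field K] {q : ℕ} (hq : 1 < q)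
    {a b : K} (ha : a ≠ 0) : {z : K | a * z ^ q + b * z = 0}.ncard ≤ q := by
  classical
  set P : K[X] := C a * X ^ q + C b * X
  have hP : P.natDegree = q := by
    rw [natDegree_add_eq_left_of_natDegree_lt] <;> rw [natDegree_C_mul_X_pow q a ha]
    exact ((natDegree_C_mul_le b X).trans natDegree_X_le).trans_lt hq
  have hP0 : P ≠ 0 := ne_zero_of_natDegree_gt (hP ▸ hq)
  calc {z : K | a * z ^ q + b * z = 0}.ncard = P.roots.toFinset.card := by
        rw [← Set.ncard_coe_finset]; congr; ext; simp [P, hP0]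
    _ ≤ q := hP ▸ (Multiset.toFinset_card_le _).trans (card_roots' P)

theorem card_mul_add_mul_frobenius_eq {K : Type*} [Field K] [Finite K] {q : ℕ}
    (hK : Nat.card K = q ^ 2) (φ : K →+* K) (hφ : ∀ t, φ t = t ^ q) {α β c : K} (hα : α ≠ 0)
    (hαβ : α * φ α = β * φ β) (hc : α * φ c = φ β * c) :
    Nat.card {t : K // α * t + β * φ t = c} = q := by
  have := Fintype.ofFinite K
  have hq : 1 < q := by
    have := Finite.one_lt_card (α := K)
    by_contra! h; interval_cases q <;> simp_all
  have hφφ (t : K) : φ (φ t) = t := by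
    rw [hφ, hφ, ← pow_mul, ← sq, ← hK, Nat.card_eq_fintype_card, FiniteField.pow_card]
  have hβ : β ≠ 0 := by rintro rfl; simp [hφ, hα] at hαβ
  let L : K →+ K := AddMonoidHom.mk' (fun t => α * t + β * φ t) fun t u => by
    simp only [map_add]; ring
  -- `α φ (L t) = φ β (L t)`: the image of `L` lies in the roots of `α z ^ q - φ β z`
  refine L.card_fiber_eq_of_card_ker_le (b := q) (S := {z | α * z ^ q + -φ β * z = 0})
    (by rw [hK, sq]) ?_ (fun t => ?_) (ncard_setOf_mul_pow_add_mul_eq_zero_le hq hα) ?_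
  · have hsub : (L.ker : Set K) ⊆ {z | β * z ^ q + α * z = 0} := fun z hz => by
      simp only [SetLike.mem_coe, AddMonoidHom.mem_ker] at hz
      simp only [Set.mem_ofPred_eq, ← hφ]
      rw [← hz, AddMonoidHom.mk'_apply, add_comm]
    exact (Nat.card_coe_set_eq (L.ker : Set K)).trans_le
      ((Set.ncard_le_ncard hsub).trans (ncard_setOf_mul_pow_add_mul_eq_zero_le hq hβ))
  · simp only [Set.mem_ofPred_eq, ← hφ]
    simp only [L, AddMonoidHom.mk'_apply, map_add, map_mul, hφφ]
    linear_combination φ t * hαβ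
  · simp only [Set.mem_ofPred_eq, ← hφ]
    linear_combination hc

section Conj

variable {R : Type*} [CommRing R]

theorem aeval_eq_pow_mul_aeval_of_reverse_eq {A : Type*} [CommRing A] [Algebra R A] {f : R[X]}
    (hf : f.reverse = f) {x y : A} (hxy : x * y = 1) :
    aeval y f = y ^ f.natDegree * aeval x f := by
  let _ : Invertible x := ⟨y, by rwa [mul_comm], hxy⟩
  have h := eval₂_reverse_mul_pow (algebraMap R A) x f
  rw [hf] at h
  rw [aeval_def, aeval_def, ← h, mul_left_comm, ← mul_pow, mul_comm y, hxy, one_pow, mul_one]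
  rfl

theorem aeval_pow_eq_zero_of_mul_eq_one {A : Type*} [CommRing A] [Algebra R A] {f : R[X]}
    (hf : f.reverse = f) {x y : A} (hxy : x * y = 1) {s : ℕ} (hx : aeval x (f ^ s) = 0) :
    aeval y (f ^ s) = 0 := by
  rw [map_pow] at hx ⊢
  rw [aeval_eq_pow_mul_aeval_of_reverse_eq hf hxy, mul_pow, hx, mul_zero]

theorem root_mul_root_pow_pred {g : R[X]} {N : ℕ} (hg : g ∣ X ^ N - 1) (hN : 0 < N) :
    root g * root g ^ (N - 1) = 1 := by
  rw [← pow_succ', Nat.sub_add_cancel hN, ← sub_eq_zero, ← mk_X, ← map_pow, ← map_one (mk g),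
    ← map_sub, mk_eq_zero]
  exact hg

theorem aeval_root_pow_pred_eq_zero {f : R[X]} (hf : f.reverse = f) {s N : ℕ}
    (hN : f ^ s ∣ X ^ N - 1) (hN0 : 0 < N) : aeval (root (f ^ s) ^ (N - 1)) (f ^ s) = 0 :=
  aeval_pow_eq_zero_of_mul_eq_one hf (root_mul_root_pow_pred hN hN0) (by rw [aeval_eq, mk_self])

noncomputable def conj (g : R[X]) (N : ℕ) (h : aeval (root g ^ (N - 1)) g = 0) :
    AdjoinRoot g →ₐ[R] AdjoinRoot g :=
  liftAlgHom g (Algebra.ofId R _) (root g ^ (N - 1)) h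

theorem algHomOfDvd_mk {g g' : R[X]} (hg' : g' ∣ g) (p : R[X]) :
    algHomOfDvd R g g' hg' (mk g p) = mk g' p := by
  rw [← aeval_eq, ← aeval_algHom_apply, algHomOfDvd_root, aeval_eq]

variable {g : R[X]} {N : ℕ} (h : aeval (root g ^ (N - 1)) g = 0)

theorem conj_root : conj g N h (root g) = root g ^ (N - 1) :=
  liftAlgHom_root ..

theorem conj_mk (p : R[X]) : conj g N h (mk g p) = mk g (p.comp (X ^ (N - 1))) := by
  rw [← aeval_eq, ← aeval_algHom_apply, conj_root, ← aeval_eq, aeval_comp, map_pow, aeval_X]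

theorem conj_conj (hg : g ∣ X ^ N - 1) (hN : 0 < N) (a : AdjoinRoot g) :
    conj g N h (conj g N h a) = a := by
  have hroot := root_mul_root_pow_pred hg hN
  rw [← conj_root h] at hroot
  have hconj : conj g N h (root g) * conj g N h (conj g N h (root g)) = 1 := by
    rw [← map_mul, hroot, map_one]
  have hid : (conj g N h).comp (conj g N h) = AlgHom.id R _ :=
    algHom_ext (left_inv_eq_right_inv hroot hconj).symm
  exact AlgHom.congr_fun hid a

theorem algHomOfDvd_conj {g' : R[X]} (hg' : g' ∣ g) (h' : aeval (root g' ^ (N - 1)) g' = 0)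
    (a : AdjoinRoot g) :
    algHomOfDvd R g g' hg' (conj g N h a) = conj g' N h' (algHomOfDvd R g g' hg' a) := by
  have : (algHomOfDvd R g g' hg').comp (conj g N h) =
      (conj g' N h').comp (algHomOfDvd R g g' hg') :=
    algHom_ext (by simp [conj_root])
  exact AlgHom.congr_fun this a

/-- The paper's `W^(s)` is `unitaries (f ^ s) N`. -/
def unitaries (g : R[X]) (N : ℕ) : Set (AdjoinRoot g) :=
  {a | ∃ p : R[X], mk g p = a ∧ mk g (p * p.comp (X ^ (N - 1))) = 1}

theorem mem_unitaries_iff {a : AdjoinRoot g} : a ∈ unitaries g N ↔ a * conj g N h a = 1 := by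
  constructor
  · rintro ⟨p, rfl, hp⟩
    rwa [conj_mk, ← map_mul]
  · intro ha
    obtain ⟨p, rfl⟩ := mk_surjective a
    exact ⟨p, rfl, by rwa [map_mul, ← conj_mk h]⟩

end Conj

theorem root_ne_of_one_lt_natDegree {R : Type*} [CommRing R] [IsDomain R] {f : R[X]}
    (hd : 1 < f.natDegree) (c : R) : root f ≠ of f c := fun hc => by
  have hdvd : f ∣ X - C c := mk_eq_zero.mp (by rw [map_sub, mk_X, mk_C, hc, sub_self])
  have := natDegree_le_of_dvd hdvd (X_sub_C_ne_zero c)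
  rw [natDegree_X_sub_C] at this
  omega

theorem finite_adjoinRoot {F : Type*} [Field F] [Finite F] {g : F[X]} (hg : g ≠ 0) :
    Finite (AdjoinRoot g) :=
  have := (powerBasis hg).finite
  Module.finite_of_finite F

section ResidueField

variable {F : Type*} [Field F] [Fintype F] {f : F[X]} [Fact (Irreducible f)] {N : ℕ}

theorem natCard_adjoinRoot : Nat.card (AdjoinRoot f) = Fintype.card F ^ f.natDegree := by
  have hf : f ≠ 0 := (Fact.out : Irreducible f).ne_zero
  have := finite_adjoinRoot hf
  have := Fintype.ofFinite (AdjoinRoot f)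
  rw [Nat.card_eq_fintype_card, Module.card_eq_pow_finrank (K := F), (powerBasis hf).finrank,
    powerBasis_dim]

theorem exists_conj_eq_frobeniusAlgHom_pow (hd : 2 ≤ f.natDegree)
    (h : aeval (root f ^ (N - 1)) f = 0) (hN : f ∣ X ^ N - 1) (hN0 : 0 < N) :
    ∃ i, 2 * i = f.natDegree ∧ conj f N h = FiniteField.frobeniusAlgHom F (AdjoinRoot f) ^ i := by
  have hf : f ≠ 0 := (Fact.out : Irreducible f).ne_zero
  have := finite_adjoinRoot hf
  have hrank : Module.finrank F (AdjoinRoot f) = f.natDegree := by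
    rw [(powerBasis hf).finrank, powerBasis_dim]
  obtain ⟨⟨i, hi⟩, hσ⟩ :=
    (FiniteField.bijective_frobeniusAlgHom_pow F (AdjoinRoot f)).2 (conj f N h)
  dsimp only at hσ
  have hsq : conj f N h ^ 2 = 1 :=
    AlgHom.ext fun a => conj_conj h hN hN0 a
  have hne : conj f N h ≠ 1 := by
    intro h1
    have hroot := root_mul_root_pow_pred hN hN0
    rw [← conj_root h, h1, AlgHom.one_apply, mul_self_eq_one_iff] at hroot
    rcases hroot with h1 | h1
    · exact root_ne_of_one_lt_natDegree hd 1 (by rw [h1, map_one])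
    · exact root_ne_of_one_lt_natDegree hd (-1) (by rw [h1, map_neg, map_one])
  have hi0 : i ≠ 0 := by rintro rfl; exact hne (by rw [← hσ, pow_zero])
  have hdvd : f.natDegree ∣ 2 * i := by
    rw [← hrank, ← FiniteField.orderOf_frobeniusAlgHom]
    exact orderOf_dvd_of_pow_eq_one (by rw [mul_comm, pow_mul, hσ, hsq])
  rw [hrank] at hi
  exact ⟨i, Nat.eq_of_dvd_of_lt_two_mul (by omega) hdvd (by omega), hσ.symm⟩

end ResidueField

section Lifting

variable {R : Type*} [CommRing R]

noncomputable def mulPow (f : R[X]) (s : ℕ) : AdjoinRoot f →+ AdjoinRoot (f ^ (s + 1)) :=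
  ((Ideal.span {f}).liftQ ((Ideal.span {f ^ (s + 1)}).mkQ ∘ₗ LinearMap.mulLeft R[X] (f ^ s))
    (by
      rw [Ideal.span, Submodule.span_le, Set.singleton_subset_iff, SetLike.mem_coe,
        LinearMap.mem_ker, LinearMap.comp_apply, LinearMap.mulLeft_apply, ← pow_succ]
      exact (Submodule.Quotient.mk_eq_zero _).mpr (Ideal.mem_span_singleton_self _))).toAddMonoidHom

variable {f : R[X]} {s N : ℕ}

theorem mulPow_mk (t : R[X]) : mulPow f s (mk f t) = mk (f ^ (s + 1)) (f ^ s * t) :=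
  rfl

theorem mulPow_surjective_of_algHomOfDvd_eq_zero {a : AdjoinRoot (f ^ (s + 1))}
    (ha : algHomOfDvd R (f ^ (s + 1)) (f ^ s) (pow_dvd_pow f s.le_succ) a = 0) :
    ∃ T, mulPow f s T = a := by
  obtain ⟨p, rfl⟩ := mk_surjective a
  rw [algHomOfDvd_mk, mk_eq_zero] at ha
  obtain ⟨t, rfl⟩ := ha
  exact ⟨mk f t, rfl⟩

theorem mul_mulPow (u : AdjoinRoot (f ^ (s + 1))) (T : AdjoinRoot f) :
    u * mulPow f s T = mulPow f s (algHomOfDvd R _ f (dvd_pow_self f s.succ_ne_zero) u * T) := by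
  obtain ⟨p, rfl⟩ := mk_surjective u
  obtain ⟨t, rfl⟩ := mk_surjective T
  rw [algHomOfDvd_mk, ← map_mul, mulPow_mk, mulPow_mk, ← map_mul, mul_left_comm]

theorem mulPow_mul_mulPow (hs : 1 ≤ s) (T T' : AdjoinRoot f) :
    mulPow f s T * mulPow f s T' = 0 := by
  obtain ⟨t, rfl⟩ := mk_surjective T
  obtain ⟨t', rfl⟩ := mk_surjective T'
  rw [mulPow_mk, mulPow_mk, ← map_mul, mk_eq_zero]
  exact (pow_dvd_pow f (by omega : s + 1 ≤ s + s)).trans ⟨t * t', by ring⟩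

theorem mulPow_injective [IsDomain R] (hf : f ≠ 0) : Function.Injective (mulPow f s) := by
  refine (injective_iff_map_eq_zero _).mpr fun T hT => ?_
  obtain ⟨t, rfl⟩ := mk_surjective T
  rw [mulPow_mk, mk_eq_zero, pow_succ, mul_dvd_mul_iff_left (pow_ne_zero s hf)] at hT
  exact mk_eq_zero.mpr hT

theorem algHomOfDvd_mulPow (hs : 1 ≤ s) (T : AdjoinRoot f) :
    algHomOfDvd R _ f (dvd_pow_self f s.succ_ne_zero) (mulPow f s T) = 0 := by
  obtain ⟨t, rfl⟩ := mk_surjective T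
  rw [mulPow_mk, algHomOfDvd_mk, mk_eq_zero]
  exact (dvd_pow_self f (by omega)).mul_right t

theorem algHomOfDvd_pow_mulPow (T : AdjoinRoot f) :
    algHomOfDvd R _ (f ^ s) (pow_dvd_pow f s.le_succ) (mulPow f s T) = 0 := by
  obtain ⟨t, rfl⟩ := mk_surjective T
  rw [mulPow_mk, algHomOfDvd_mk, mk_eq_zero]
  exact dvd_mul_right _ t

theorem conj_mulPow (hf : f.reverse = f) (hN : f ^ (s + 1) ∣ X ^ N - 1) (hN0 : 0 < N)
    (hA : aeval (root (f ^ (s + 1)) ^ (N - 1)) (f ^ (s + 1)) = 0)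
    (hK : aeval (root f ^ (N - 1)) f = 0) (T : AdjoinRoot f) :
    conj _ N hA (mulPow f s T) =
      mulPow f s (conj f N hK (root f) ^ (f.natDegree * s) * conj f N hK T) := by
  obtain ⟨t, rfl⟩ := mk_surjective T
  have hconj_f : conj _ N hA (mk _ f) = conj _ N hA (root _) ^ f.natDegree * mk _ f := by
    rw [← aeval_eq, ← aeval_algHom_apply, conj_root]
    exact aeval_eq_pow_mul_aeval_of_reverse_eq hf (root_mul_root_pow_pred hN hN0)
  have hconj_one : conj _ N hA (mulPow f s 1) =
      conj _ N hA (root _) ^ (f.natDegree * s) * mulPow f s 1 := by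
    rw [← map_one (mk f), mulPow_mk, mul_one, map_pow, map_pow, hconj_f, mul_pow, ← pow_mul]
  have hdvd := dvd_pow_self f s.succ_ne_zero
  rw [show mulPow f s (mk f t) = mk _ t * mulPow f s 1 by rw [mul_mulPow, algHomOfDvd_mk, mul_one],
    map_mul, hconj_one, mul_left_comm, mul_mulPow, mul_mulPow, mul_one, map_pow,
    algHomOfDvd_conj _ hdvd hK, algHomOfDvd_conj _ hdvd hK, algHomOfDvd_root, algHomOfDvd_mk]

theorem mul_conj_add_mulPow (hf : f.reverse = f) (hs : 1 ≤ s) (hN : f ^ (s + 1) ∣ X ^ N - 1)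
    (hN0 : 0 < N) (hA : aeval (root (f ^ (s + 1)) ^ (N - 1)) (f ^ (s + 1)) = 0)
    (hK : aeval (root f ^ (N - 1)) f = 0) (a : AdjoinRoot (f ^ (s + 1))) (T : AdjoinRoot f) :
    (a + mulPow f s T) * conj _ N hA (a + mulPow f s T) = a * conj _ N hA a +
      mulPow f s (conj f N hK (algHomOfDvd R _ f (dvd_pow_self f s.succ_ne_zero) a) * T +
        algHomOfDvd R _ f (dvd_pow_self f s.succ_ne_zero) a *
          conj f N hK (root f) ^ (f.natDegree * s) * conj f N hK T) := by
  rw [map_add, conj_mulPow hf hN hN0 hA hK, add_mul, mul_add, mul_add, mulPow_mul_mulPow hs,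
    mul_comm (mulPow f s T), mul_mulPow, mul_mulPow, algHomOfDvd_conj hA _ hK, map_add, mul_assoc]
  abel

theorem add_mulPow_mem_unitaries_iff [IsDomain R] (hf : f.reverse = f) (hf0 : f ≠ 0) (hs : 1 ≤ s)
    (hN : f ^ (s + 1) ∣ X ^ N - 1) (hN0 : 0 < N)
    (hA : aeval (root (f ^ (s + 1)) ^ (N - 1)) (f ^ (s + 1)) = 0)
    (hK : aeval (root f ^ (N - 1)) f = 0) {a₀ : AdjoinRoot (f ^ (s + 1))} {W : AdjoinRoot f}
    (ha₀ : a₀ * conj _ N hA a₀ = 1 + mulPow f s W) (T : AdjoinRoot f) :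
    a₀ + mulPow f s T ∈ unitaries (f ^ (s + 1)) N ↔
      conj f N hK (algHomOfDvd R _ f (dvd_pow_self f s.succ_ne_zero) a₀) * T +
        algHomOfDvd R _ f (dvd_pow_self f s.succ_ne_zero) a₀ *
          conj f N hK (root f) ^ (f.natDegree * s) * conj f N hK T = -W := by
  rw [mem_unitaries_iff hA, mul_conj_add_mulPow hf hs hN hN0 hA hK, ha₀, add_assoc, add_eq_left,
    ← map_add, map_eq_zero_iff _ (mulPow_injective hf0), add_eq_zero_iff_neg_eq, eq_comm]

noncomputable def fiberEquivMulPow [IsDomain R] (hf : f ≠ 0) (U : Set (AdjoinRoot (f ^ (s + 1))))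
    (a₀ : AdjoinRoot (f ^ (s + 1))) :
    {T // a₀ + mulPow f s T ∈ U} ≃ {a // a ∈ U ∧
      algHomOfDvd R _ (f ^ s) (pow_dvd_pow f s.le_succ) a =
        algHomOfDvd R _ (f ^ s) (pow_dvd_pow f s.le_succ) a₀} :=
  Equiv.ofBijective
    (fun T => ⟨a₀ + mulPow f s T, T.2, by rw [map_add, algHomOfDvd_pow_mulPow, add_zero]⟩)
    ⟨fun _ _ h => Subtype.ext (mulPow_injective hf (add_left_cancel (congrArg Subtype.val h))),
      fun ⟨a, ha, hρ⟩ => by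
        obtain ⟨T, hT⟩ := mulPow_surjective_of_algHomOfDvd_eq_zero (a := a - a₀)
          (by rw [map_sub, hρ, sub_self])
        have ha' : a = a₀ + mulPow f s T := by rw [hT]; ring
        exact ⟨⟨T, ha' ▸ ha⟩, Subtype.ext ha'.symm⟩⟩

end Lifting

section Counting

variable {F : Type*} [Field F] [Finite F] {f : F[X]} [Fact (Irreducible f)] {N s q : ℕ}

theorem card_unitaries_of_conj_eq_pow (hK : aeval (root f ^ (N - 1)) f = 0)
    (hq : ∀ t, conj f N hK t = t ^ q) (hcard : Nat.card (AdjoinRoot f) = q ^ 2) :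
    Nat.card (unitaries f N) = q + 1 := by
  have := finite_adjoinRoot (Fact.out : Irreducible f).ne_zero
  refine (Nat.card_congr (Equiv.subtypeEquivRight fun a => ?_)).trans
    (card_pow_eq_one_of_dvd_card_sub_one ⟨q - 1, by rw [hcard]; simpa using Nat.sq_sub_sq q 1⟩)
  rw [mem_unitaries_iff hK, hq, pow_succ']

theorem card_fiber_unitaries (hf : f.reverse = f) (hs : 1 ≤ s) (hN : f ^ (s + 1) ∣ X ^ N - 1)
    (hN0 : 0 < N) (hK : aeval (root f ^ (N - 1)) f = 0) (hq : ∀ t, conj f N hK t = t ^ q)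
    (hcard : Nat.card (AdjoinRoot f) = q ^ 2) {b : AdjoinRoot (f ^ s)}
    (hb : b ∈ unitaries (f ^ s) N) :
    Nat.card {a // a ∈ unitaries (f ^ (s + 1)) N ∧
      algHomOfDvd F (f ^ (s + 1)) (f ^ s) (pow_dvd_pow f s.le_succ) a = b} = q := by
  have hf0 : f ≠ 0 := (Fact.out : Irreducible f).ne_zero
  have := finite_adjoinRoot hf0
  have hdvd : f ∣ f ^ (s + 1) := dvd_pow_self f s.succ_ne_zero
  have hNK : f ∣ X ^ N - 1 := hdvd.trans hN
  have hA := aeval_root_pow_pred_eq_zero hf hN hN0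
  have hB := aeval_root_pow_pred_eq_zero hf ((pow_dvd_pow f s.le_succ).trans hN) hN0
  obtain ⟨a₀, rfl⟩ :
      ∃ a₀, algHomOfDvd F (f ^ (s + 1)) (f ^ s) (pow_dvd_pow f s.le_succ) a₀ = b := by
    obtain ⟨p, rfl⟩ := mk_surjective b
    exact ⟨mk _ p, algHomOfDvd_mk _ p⟩
  rw [mem_unitaries_iff hB, ← algHomOfDvd_conj hA _ hB, ← map_mul] at hb
  obtain ⟨W, hW⟩ := mulPow_surjective_of_algHomOfDvd_eq_zero (a := a₀ * conj _ N hA a₀ - 1)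
    (by rw [map_sub, hb, map_one, sub_self])
  have ha₀ : a₀ * conj _ N hA a₀ = 1 + mulPow f s W := by rw [hW]; ring
  set σK := conj f N hK
  set P := algHomOfDvd F (f ^ (s + 1)) f hdvd a₀
  set E := σK (root f) ^ (f.natDegree * s)
  have hP : P * σK P = 1 := by
    rw [← algHomOfDvd_conj hA _ hK, ← map_mul, ha₀, map_add, map_one, algHomOfDvd_mulPow hs,
      add_zero]
  have hE : E * σK E = 1 := by
    have hroot : root f * σK (root f) = 1 := by rw [conj_root]; exact root_mul_root_pow_pred hNK hN0
    rw [map_pow, conj_conj hK hNK hN0, ← mul_pow, mul_comm, hroot, one_pow]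
  have hEW : σK W = σK E * W := by
    -- the involution fixes `a₀ * conj a₀ - 1 = mulPow f s W`
    have h := conj_mulPow hf hN hN0 hA hK W
    rw [hW, map_sub, map_mul, conj_conj hA hN hN0, map_one, mul_comm (conj _ N hA a₀), ← hW] at h
    conv_lhs => rw [mulPow_injective hf0 h, map_mul, conj_conj hK hNK hN0]
  rw [← Nat.card_congr (fiberEquivMulPow hf0 _ a₀), ← Nat.card_congr
    (Equiv.subtypeEquivRight (add_mulPow_mem_unitaries_iff hf hf0 hs hN hN0 hA hK ha₀)).symm]
  refine card_mul_add_mul_frobenius_eq hcard σK.toRingHom hq (right_ne_zero_of_mul_eq_one hP) ?_ ?_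
  · change σK P * σK (σK P) = P * E * σK (P * E)
    rw [conj_conj hK hNK hN0, map_mul, mul_comm (σK P), hP, mul_mul_mul_comm, hP, hE, one_mul]
  · change σK P * σK (-W) = σK (P * E) * -W
    rw [map_neg, hEW, map_mul]
    ring

theorem card_unitaries_pow_succ (hf : f.reverse = f) (hs : 1 ≤ s)
    (hN : f ^ (s + 1) ∣ X ^ N - 1) (hN0 : 0 < N) (hK : aeval (root f ^ (N - 1)) f = 0)
    (hq : ∀ t, conj f N hK t = t ^ q) (hcard : Nat.card (AdjoinRoot f) = q ^ 2) :
    Nat.card (unitaries (f ^ (s + 1)) N) = q * Nat.card (unitaries (f ^ s) N) := by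
  have hf0 : f ≠ 0 := (Fact.out : Irreducible f).ne_zero
  have := finite_adjoinRoot (pow_ne_zero s hf0)
  have := finite_adjoinRoot (pow_ne_zero (s + 1) hf0)
  have := Fintype.ofFinite (unitaries (f ^ s) N)
  have hA := aeval_root_pow_pred_eq_zero hf hN hN0
  have hB := aeval_root_pow_pred_eq_zero hf ((pow_dvd_pow f s.le_succ).trans hN) hN0
  have hmaps : Set.MapsTo (algHomOfDvd F (f ^ (s + 1)) (f ^ s) (pow_dvd_pow f s.le_succ))
      (unitaries (f ^ (s + 1)) N) (unitaries (f ^ s) N) := fun a ha => by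
    rw [mem_unitaries_iff hA] at ha
    rw [mem_unitaries_iff hB, ← algHomOfDvd_conj hA _ hB, ← map_mul, ha, map_one]
  calc Nat.card (unitaries (f ^ (s + 1)) N)
      = ∑ b, Nat.card {a // Set.MapsTo.restrict _ _ _ hmaps a = b} :=
        (Nat.card_congr (Equiv.sigmaFiberEquiv (Set.MapsTo.restrict _ _ _ hmaps))).symm.trans
          Nat.card_sigma
    _ = ∑ _b : unitaries (f ^ s) N, q := by
        refine Finset.sum_congr rfl fun b _ => ?_
        rw [← card_fiber_unitaries hf hs hN hN0 hK hq hcard b.2]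
        exact Nat.card_congr ((Equiv.subtypeEquivRight fun a => Subtype.ext_iff).trans
          (Equiv.subtypeSubtypeEquivSubtypeInter _
            fun a => algHomOfDvd F (f ^ (s + 1)) (f ^ s) (pow_dvd_pow f s.le_succ) a = b))
    _ = q * Nat.card (unitaries (f ^ s) N) := by
        rw [Finset.sum_const, Finset.card_univ, smul_eq_mul, mul_comm, Nat.card_eq_fintype_card]

theorem card_unitaries_pow (hf : f.reverse = f) (hs : 1 ≤ s) (hN : f ^ s ∣ X ^ N - 1)
    (hN0 : 0 < N) (hK : aeval (root f ^ (N - 1)) f = 0) (hq : ∀ t, conj f N hK t = t ^ q)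
    (hcard : Nat.card (AdjoinRoot f) = q ^ 2) :
    Nat.card (unitaries (f ^ s) N) = (q + 1) * q ^ (s - 1) := by
  induction s, hs using Nat.le_induction with
  | base => rw [pow_one, card_unitaries_of_conj_eq_pow hK hq hcard, Nat.sub_self, pow_zero, mul_one]
  | succ s hs ih =>
    rw [card_unitaries_pow_succ hf hs hN hN0 hK hq hcard,
      ih ((pow_dvd_pow f s.le_succ).trans hN), Nat.add_sub_cancel, ← Nat.sub_add_cancel hs,
      Nat.add_sub_cancel, pow_succ]
    ring

end Counting

theorem stmt_12_general (n : ℕ) (hn0 : 0 < n) (f : Polynomial (ZMod 2))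
    (hirr : Irreducible f) (hd : 2 ≤ f.natDegree)
    (hself : f.reverse = f) (hdvd : f ∣ X ^ n - 1)
    (l N s : ℕ) (hN : N = 2 ^ l * n) (hs1 : 1 ≤ s) (hs : s ≤ 2 ^ l) :
    Nat.card {a : Polynomial (ZMod 2) ⧸ Ideal.span {f ^ s} //
      ∃ p : Polynomial (ZMod 2), Ideal.Quotient.mk (Ideal.span {f ^ s}) p = a ∧
        Ideal.Quotient.mk (Ideal.span {f ^ s}) (p * p.comp (X ^ (N - 1))) = 1}
      = (2 ^ (f.natDegree / 2) + 1) * 2 ^ ((s - 1) * (f.natDegree / 2)) := by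
  have := Fact.mk hirr
  have hN0 : 0 < N := hN ▸ by positivity
  have hXN : (X ^ n - 1 : (ZMod 2)[X]) ^ 2 ^ l = X ^ N - 1 := by
    rw [sub_pow_char_pow, one_pow, ← pow_mul, hN, mul_comm]
  have hfs : f ^ s ∣ X ^ N - 1 := (pow_dvd_pow f hs).trans (hXN ▸ pow_dvd_pow_of_dvd hdvd _)
  have hf : f ∣ X ^ N - 1 := (dvd_pow_self f (by omega)).trans hfs
  have hK : aeval (root f ^ (N - 1)) f = 0 := by
    simpa using aeval_pow_eq_zero_of_mul_eq_one (s := 1) hself (root_mul_root_pow_pred hf hN0)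
      (by rw [pow_one, aeval_eq, mk_self])
  obtain ⟨i, hi, hσ⟩ := exists_conj_eq_frobeniusAlgHom_pow hd hK hf hN0
  have hq (t : AdjoinRoot f) : conj f N hK t = t ^ 2 ^ i := by
    rw [hσ, AlgHom.coe_pow, FiniteField.coe_frobeniusAlgHom, pow_iterate, ZMod.card]
  have hcard : Nat.card (AdjoinRoot f) = (2 ^ i) ^ 2 := by
    rw [natCard_adjoinRoot, ZMod.card, ← pow_mul, ← hi, mul_comm]
  rw [← hi, Nat.mul_div_cancel_left i two_pos, mul_comm (s - 1) i, pow_mul]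
  exact card_unitaries_pow hself hs1 hfs hN0 hK hq hcard

/-- Let `f` be a self-reciprocal irreducible polynomial over `F_2` of even degree `d`
dividing `x^n - 1` (`n` odd), `λ ≥ 1`, `N = 2^λ n`, and for `1 ≤ s ≤ 2^λ` let
`W^(s) = {a ∈ F_2[x]/⟨f^s⟩ : a(x)a(x^(N-1)) ≡ 1 (mod f^s)}`.  Then
`|W^(s)| = (2^(d/2) + 1) · 2^((s-1)d/2)`. -/
theorem stmt_12 (n : ℕ) (hn : Odd n) (hn0 : 0 < n) (f : Polynomial (ZMod 2))
    (hirr : Irreducible f) (hd : 2 ≤ f.natDegree) (hdeven : Even f.natDegree)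
    (hself : f.reverse = f) (hdvd : f ∣ X ^ n - 1)
    (l N s : ℕ) (hl : 1 ≤ l) (hN : N = 2 ^ l * n) (hs1 : 1 ≤ s) (hs : s ≤ 2 ^ l) :
    Nat.card {a : Polynomial (ZMod 2) ⧸ Ideal.span {f ^ s} //
      ∃ p : Polynomial (ZMod 2), Ideal.Quotient.mk (Ideal.span {f ^ s}) p = a ∧
        Ideal.Quotient.mk (Ideal.span {f ^ s}) (p * p.comp (X ^ (N - 1))) = 1}
      = (2 ^ (f.natDegree / 2) + 1) * 2 ^ ((s - 1) * (f.natDegree / 2)) :=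
  stmt_12_general n hn0 f hirr hd hself hdvd l N s hN hs1 hs
end

section
/- Let n be odd, λ ≥ 1, N = 2^λ n, x^n - 1 = ∏_{i=0}^{r} f_i(x) over F_2, and ε_i ∈ A = F_2[x]/⟨x^N - 1⟩ the idempotent with ε_i ≡ δ_{ij} (mod f_j(x)^{2^λ}). Then ε_i(x^{-1}) = ε_{μ(i)}(x) in A, where x^{-1} = x^{N-1} and μ(i) is the index with f_{μ(i)} = f_i*, the reciprocal polynomial of f_i. -/
/-!
In `A = R[X]/⟨X^N - 1⟩` the class `u` of `X` is a unit with inverse `u^(N-1)`, so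
substituting `X ↦ X^(N-1)` is the ring map `p ↦ p(u⁻¹)`, and `g*(u⁻¹) = u^(-deg g) g(u)` for
the reciprocal `g*`. Applying it to `f_(μ k)^(2^λ) ∣ ε_i - δ_(i,μ k)` and using
`f_(μ k) = f_k*` gives `f_k^(2^λ) ∣ ε_i(x⁻¹) - δ_(μ i,k)` in `A`, which is also what `ε_(μ i)`
satisfies; since `f_k^(2^λ) ∣ X^N - 1` this divisibility lifts to `R[X]`, and the pairwise
coprime `f_k^(2^λ)` multiply to `X^N - 1`.
-/

open Polynomial

theorem X_pow_mul_sub_one_eq_prod_pow {R ι : Type*} [CommRing R] [Fintype ι] {p : ℕ}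
    [Fact p.Prime] [CharP R p] {n : ℕ} {f : ι → R[X]} (h : X ^ n - 1 = ∏ i, f i) (l : ℕ) :
    X ^ (p ^ l * n) - 1 = ∏ i, f i ^ p ^ l := by
  rw [Finset.prod_pow, ← h, sub_pow_char_pow, one_pow, ← pow_mul, mul_comm]

theorem coeff_zero_ne_zero_of_dvd_X_pow_sub_one {R : Type*} [CommRing R] [Nontrivial R]
    {q : R[X]} {n : ℕ} (hn : n ≠ 0) (h : q ∣ X ^ n - 1) : q.coeff 0 ≠ 0 := by
  intro hq
  have := X_dvd_iff.mp ((X_dvd_iff.mpr hq).trans h)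
  simp [coeff_X_pow, hn.symm] at this

theorem reverse_reverse_of_coeff_zero_ne_zero {R : Type*} [Semiring R] {f : R[X]}
    (hf : f.coeff 0 ≠ 0) : f.reverse.reverse = f := by
  have htrail : f.natTrailingDegree = 0 := natTrailingDegree_eq_zero.mpr (Or.inr hf)
  rw [reverse, reverse_natDegree, htrail, Nat.sub_zero, reverse, reflect_reflect]

theorem injective_of_pairwise_isCoprime {R ι : Type*} [CommSemiring R] {f : ι → R}
    (hcop : Pairwise fun i j => IsCoprime (f i) (f j)) (hf : ∀ i, ¬IsUnit (f i)) :
    Function.Injective f := by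
  intro i j hij
  by_contra hne
  exact hf j (isCoprime_self.mp (by simpa [hij] using hcop hne))

theorem involutive_of_apply_eq_reverse {R ι : Type*} [Semiring R] {f : ι → R[X]}
    (hf : Function.Injective f) (hf0 : ∀ i, (f i).coeff 0 ≠ 0) {μ : ι → ι}
    (hμ : ∀ i, f (μ i) = (f i).reverse) : Function.Involutive μ := fun i =>
  hf (by rw [hμ, hμ, reverse_reverse_of_coeff_zero_ne_zero (hf0 i)])

theorem dvd_of_mk_dvd_mk {R : Type*} [CommRing R] {P q a : R} (hq : q ∣ P)
    (h : Ideal.Quotient.mk (Ideal.span {P}) q ∣ Ideal.Quotient.mk (Ideal.span {P}) a) :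
    q ∣ a := by
  obtain ⟨b, hb⟩ := h
  obtain ⟨b, rfl⟩ := Ideal.Quotient.mk_surjective b
  rw [← map_mul, Ideal.Quotient.eq, Ideal.mem_span_singleton] at hb
  simpa using dvd_add (hq.trans hb) (dvd_mul_right q b)

namespace CyclicQuotient

variable {R : Type*} [CommRing R] (N : ℕ)

/-- The automorphism `x ↦ x⁻¹ = x^(N-1)` of `R[X]/⟨X^N - 1⟩`, lifted to `R[X]`. -/
noncomputable def compInv : R[X] →+* R[X] ⧸ Ideal.span {(X : R[X]) ^ N - 1} :=
  (Ideal.Quotient.mk _).comp (compRingHom (X ^ (N - 1)))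

variable {N}

theorem compInv_apply (p : R[X]) :
    compInv N p = Ideal.Quotient.mk _ (p.comp (X ^ (N - 1))) := rfl

theorem compInv_C (c : R) : compInv N (C c) = Ideal.Quotient.mk _ (C c) := by
  rw [compInv_apply, C_comp]

theorem compInv_reverse (hN : 0 < N) (g : R[X]) :
    compInv N g.reverse =
      Ideal.Quotient.mk (Ideal.span {(X : R[X]) ^ N - 1}) (g * X ^ ((N - 1) * g.natDegree)) := by
  set φ := Ideal.Quotient.mk (Ideal.span {(X : R[X]) ^ N - 1})
  have hu : φ X * φ X ^ (N - 1) = 1 := by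
    rw [← pow_succ', Nat.sub_add_cancel hN, ← map_pow, ← sub_eq_zero, ← map_one φ, ← map_sub,
      Ideal.Quotient.eq_zero_iff_mem]
    exact Ideal.subset_span rfl
  let _ : Invertible (φ X) := ⟨φ X ^ (N - 1), by rw [mul_comm, hu], hu⟩
  have hφ (p : R[X]) : φ p = eval₂ (φ.comp C) (φ X) p := by
    conv_lhs => rw [← eval₂_C_X (p := p)]
    rw [hom_eval₂]
  have hσ : compInv N g.reverse = eval₂ (φ.comp C) (⅟ (φ X)) g.reverse := by
    rw [compInv_apply, comp, hom_eval₂, map_pow]; rfl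
  -- `g*(u⁻¹) u^(deg g) = g(u)` (`eval₂_reverse_mul_pow`), then multiply by `u^(-deg g)`.
  calc compInv N g.reverse
      = eval₂ (φ.comp C) (⅟ (φ X)) g.reverse * (φ X * ⅟ (φ X)) ^ g.natDegree := by
        rw [hσ, mul_invOf_self, one_pow, mul_one]
    _ = eval₂ (φ.comp C) (⅟ (φ X)) g.reverse * φ X ^ g.natDegree *
          (⅟ (φ X)) ^ g.natDegree := by
        ring
    _ = φ (g * X ^ ((N - 1) * g.natDegree)) := by
        rw [eval₂_reverse_mul_pow, ← hφ, map_mul, map_pow, pow_mul]; rfl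

theorem mk_pow_dvd_compInv_of_reverse_pow_dvd (hN : 0 < N) {g a : R[X]} {k : ℕ}
    (h : g.reverse ^ k ∣ a) : Ideal.Quotient.mk _ g ^ k ∣ compInv N a := by
  calc Ideal.Quotient.mk _ g ^ k ∣ compInv N g.reverse ^ k := by
        refine pow_dvd_pow_of_dvd ?_ k
        rw [compInv_reverse hN, map_mul]
        exact dvd_mul_right _ _
    _ = compInv N (g.reverse ^ k) := (map_pow _ _ _).symm
    _ ∣ compInv N a := map_dvd _ h

theorem pow_dvd_comp_sub (hN : 0 < N) {g a b : R[X]} {c : R} {k : ℕ}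
    (hg : g ^ k ∣ X ^ N - 1) (ha : g.reverse ^ k ∣ a - C c) (hb : g ^ k ∣ b - C c) :
    g ^ k ∣ a.comp (X ^ (N - 1)) - b := by
  refine dvd_of_mk_dvd_mk hg ?_
  have hsplit : Ideal.Quotient.mk _ (a.comp (X ^ (N - 1)) - b) =
      compInv N (a - C c) - Ideal.Quotient.mk (Ideal.span {(X : R[X]) ^ N - 1}) (b - C c) := by
    rw [map_sub, map_sub, map_sub, compInv_C, compInv_apply]; ring
  rw [hsplit]
  refine dvd_sub ?_ (map_dvd _ hb)
  rw [map_pow]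
  exact mk_pow_dvd_compInv_of_reverse_pow_dvd hN ha

end CyclicQuotient

open CyclicQuotient

set_option synthInstance.maxHeartbeats 1000000 in
theorem stmt_16_general (n : ℕ) (hn0 : 0 < n) (l N : ℕ)
    (hN : N = 2 ^ l * n) (r : ℕ)
    (f : Fin (r + 1) → Polynomial (ZMod 2)) (hirr : ∀ i, Irreducible (f i))
    (hcop : Pairwise fun i j => IsCoprime (f i) (f j))
    (hfact : X ^ n - 1 = ∏ i, f i)
    (ε : Fin (r + 1) → Polynomial (ZMod 2) ⧸ Ideal.span {(X : Polynomial (ZMod 2)) ^ N - 1})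
    (e : Fin (r + 1) → Polynomial (ZMod 2))
    (he : ∀ i, ε i = Ideal.Quotient.mk (Ideal.span {(X : Polynomial (ZMod 2)) ^ N - 1}) (e i))
    (hcong : ∀ i j, (f j) ^ (2 ^ l) ∣ (e i - if i = j then 1 else 0))
    (μ : Fin (r + 1) → Fin (r + 1)) (hμ : ∀ i, f (μ i) = (f i).reverse) :
    ∀ i, Ideal.Quotient.mk (Ideal.span {(X : Polynomial (ZMod 2)) ^ N - 1})
            ((e i).comp (X ^ (N - 1)))
      = ε (μ i) := by
  intro i
  have hprod : X ^ N - 1 = ∏ k, f k ^ 2 ^ l := hN ▸ X_pow_mul_sub_one_eq_prod_pow hfact l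
  have hf0 k : (f k).coeff 0 ≠ 0 :=
    coeff_zero_ne_zero_of_dvd_X_pow_sub_one hn0.ne' (hfact ▸ Finset.dvd_prod_of_mem f (by simp))
  have hμμ : Function.Involutive μ := involutive_of_apply_eq_reverse
    (injective_of_pairwise_isCoprime hcop fun k => (hirr k).not_isUnit) hf0 hμ
  rw [he, Ideal.Quotient.eq, Ideal.mem_span_singleton, hprod]
  refine Fintype.prod_dvd_of_coprime (hcop.mono fun _ _ h => h.pow) fun k => ?_
  have hδ : (if i = μ k then 1 else 0 : (ZMod 2)[X]) = C (if μ i = k then 1 else 0) := by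
    simp only [← hμμ.eq_iff, apply_ite C, map_one, map_zero]
  refine pow_dvd_comp_sub (c := if μ i = k then 1 else 0) (by rw [hN]; positivity)
    (hprod ▸ Finset.dvd_prod_of_mem _ (by simp)) ?_ ?_
  · simpa only [← hμ, ← hδ] using hcong i (μ k)
  · simpa only [apply_ite C, map_one, map_zero] using hcong (μ i) k

set_option synthInstance.maxHeartbeats 1000000 in
/-- With `x^n - 1 = ∏ f_i` (`n` odd), `N = 2^λ n`, and `ε_i` the primitive idempotent of
`A = F_2[x]/⟨x^N - 1⟩` corresponding to `f_i^(2^λ)` (represented by `e_i`), one has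
`ε_i(x⁻¹) = ε_(μ(i))(x)` in `A`, where `x⁻¹ = x^(N-1)` and `μ` is the permutation of
indices with `f_(μ(i)) = f_i*`, the reciprocal polynomial of `f_i`. -/
theorem stmt_16 (n : ℕ) (hn : Odd n) (hn0 : 0 < n) (l N : ℕ) (hl : 1 ≤ l)
    (hN : N = 2 ^ l * n) (r : ℕ)
    (f : Fin (r + 1) → Polynomial (ZMod 2)) (hirr : ∀ i, Irreducible (f i))
    (hcop : Pairwise fun i j => IsCoprime (f i) (f j))
    (hfact : X ^ n - 1 = ∏ i, f i)
    (ε : Fin (r + 1) → Polynomial (ZMod 2) ⧸ Ideal.span {(X : Polynomial (ZMod 2)) ^ N - 1})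
    (e : Fin (r + 1) → Polynomial (ZMod 2))
    (he : ∀ i, ε i = Ideal.Quotient.mk (Ideal.span {(X : Polynomial (ZMod 2)) ^ N - 1}) (e i))
    (hcong : ∀ i j, (f j) ^ (2 ^ l) ∣ (e i - if i = j then 1 else 0))
    (μ : Fin (r + 1) → Fin (r + 1)) (hμ : ∀ i, f (μ i) = (f i).reverse) :
    ∀ i, Ideal.Quotient.mk (Ideal.span {(X : Polynomial (ZMod 2)) ^ N - 1})
            ((e i).comp (X ^ (N - 1)))
      = ε (μ i) :=
  stmt_16_general n hn0 l N hN r f hirr hcop hfact ε e he hcong μ hμ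
end

section
/- Let A be a commutative ring and let a_0(x), a_1(x), b_0(x), b_1(x) be elements of R = F_2[x]/⟨x^N - 1⟩ with coefficient vectors a = (a_{0,0},...,a_{N-1,0}, a_{0,1},...,a_{N-1,1}) and b = (b_{0,0},...,b_{N-1,0}, b_{0,1},...,b_{N-1,1}) in F_2^{2N}. If a_0(x) b_0(x^{-1}) + a_1(x) b_1(x^{-1}) = 0 in R, where x^{-1} = x^{N-1}, then the Euclidean inner product [a,b] = ∑_{k=0}^{N-1} ∑_{j=0}^{1} a_{k,j} b_{k,j} is 0 in F_2. -/
/-!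
Send `F₂[x]` to the group algebra `F₂[ℤ/N]` by `x ↦ [1]`. Since `[1]` is a root of `x^N - 1`
the hypothesis survives this map, and `x^{N-1}` becomes `[-1]`, so the product
`a_j(x) b_j(x⁻¹)` turns into `(∑ a_{k,j} [k]) (∑ b_{k,j} [-k])`, whose coefficient at `0`
is `∑_k a_{k,j} b_{k,j}` because `k ↦ [k]` is injective on `Fin N`.
-/

open Polynomial AddMonoidAlgebra

theorem AddMonoidAlgebra.coeff_sum_single_mul_sum_single_neg_zero {R G ι : Type*} [Semiring R]
    [AddGroup G] [Fintype ι] {f : ι → G} (hf : Function.Injective f) (u v : ι → R) :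
    ((∑ i, single (f i) (u i)) * ∑ j, single (-f j) (v j)).coeff 0 = ∑ i, u i * v i := by
  classical
  simp [Finset.sum_mul_sum, single_mul_single, coeff_sum, coeff_single, Finsupp.single_apply,
    add_neg_eq_zero, hf.eq_iff]

theorem Fin.natCast_val_injective_zmod (N : ℕ) :
    Function.Injective fun k : Fin N ↦ ((k : ℕ) : ZMod N) := fun k l h ↦
  Fin.ext <| by simpa [ZMod.natCast_eq_natCast_iff', Nat.mod_eq_of_lt] using h

section
variable {R : Type*} [CommRing R] {N : ℕ}

variable (R N) in
noncomputable abbrev cyclicGen : R[ZMod N] := single 1 1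

theorem aeval_cyclicGen_eq_zero_of_mk_eq_zero {p : R[X]}
    (h : Ideal.Quotient.mk (Ideal.span {X ^ N - 1}) p = 0) : aeval (cyclicGen R N) p = 0 := by
  obtain ⟨q, rfl⟩ := Ideal.mem_span_singleton'.mp (Ideal.Quotient.eq_zero_iff_mem.mp h)
  simp [one_def]

theorem aeval_cyclicGen_sum (u : Fin N → R) :
    aeval (cyclicGen R N) (∑ k : Fin N, C (u k) * X ^ (k : ℕ)) =
      ∑ k : Fin N, single (k : ZMod N) (u k) := by
  simp [single_mul_single]

theorem aeval_cyclicGen_sum_comp (v : Fin N → R) :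
    aeval (cyclicGen R N) ((∑ k : Fin N, C (v k) * X ^ (k : ℕ)).comp (X ^ (N - 1))) =
      ∑ k : Fin N, single (-(k : ZMod N)) (v k) := by
  cases N with
  | zero => simp
  | succ n =>
    have hn : (n : ZMod (n + 1)) = -1 :=
      eq_neg_of_add_eq_zero_left (by exact_mod_cast ZMod.natCast_self (n + 1))
    simp [single_mul_single, hn]
end

theorem stmt_17_general (N : ℕ)
    (a0 a1 b0 b1 : Fin N → ZMod 2)
    (h : Ideal.Quotient.mk (Ideal.span {(X : Polynomial (ZMod 2)) ^ N - 1})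
          ((∑ k : Fin N, C (a0 k) * X ^ (k : ℕ)) *
              (∑ k : Fin N, C (b0 k) * X ^ (k : ℕ)).comp (X ^ (N - 1)) +
            (∑ k : Fin N, C (a1 k) * X ^ (k : ℕ)) *
              (∑ k : Fin N, C (b1 k) * X ^ (k : ℕ)).comp (X ^ (N - 1))) = 0) :
    (∑ k : Fin N, (a0 k * b0 k + a1 k * b1 k)) = 0 := by
  have hcoeff := congr(($(aeval_cyclicGen_eq_zero_of_mk_eq_zero h)).coeff 0)
  simp only [map_add, map_mul, aeval_cyclicGen_sum, aeval_cyclicGen_sum_comp,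
    AddMonoidAlgebra.coeff_add, AddMonoidAlgebra.coeff_zero, Finsupp.add_apply,
    Finsupp.coe_zero, Pi.zero_apply,
    coeff_sum_single_mul_sum_single_neg_zero (Fin.natCast_val_injective_zmod N)] at hcoeff
  rwa [Finset.sum_add_distrib]

/-- Let `a = (a₀, a₁)` and `b = (b₀, b₁)` be vectors in `F_2^(2N)` with associated
polynomials `a_j(x) = ∑ a_{k,j} x^k`, `b_j(x) = ∑ b_{k,j} x^k` in `R = F_2[x]/⟨x^N - 1⟩`.
If `a₀(x)b₀(x⁻¹) + a₁(x)b₁(x⁻¹) = 0` in `R` (with `x⁻¹ = x^(N-1)`), then the Euclidean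
inner product `[a, b] = ∑_k ∑_j a_{k,j} b_{k,j}` vanishes. -/
theorem stmt_17 (N : ℕ) (hN : 0 < N)
    (a0 a1 b0 b1 : Fin N → ZMod 2)
    (h : Ideal.Quotient.mk (Ideal.span {(X : Polynomial (ZMod 2)) ^ N - 1})
          ((∑ k : Fin N, C (a0 k) * X ^ (k : ℕ)) *
              (∑ k : Fin N, C (b0 k) * X ^ (k : ℕ)).comp (X ^ (N - 1)) +
            (∑ k : Fin N, C (a1 k) * X ^ (k : ℕ)) *
              (∑ k : Fin N, C (b1 k) * X ^ (k : ℕ)).comp (X ^ (N - 1))) = 0) :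
    (∑ k : Fin N, (a0 k * b0 k + a1 k * b1 k)) = 0 :=
  stmt_17_general N a0 a1 b0 b1 h
end

section
/- Let f be a self-reciprocal irreducible polynomial over F_2 of even degree d dividing x^n - 1 (n odd), λ ≥ 2, and A = F_2[x]/⟨f(x)^{2^λ}⟩. For 1 ≤ k ≤ 2^λ - 1, the A-submodule C of A^2 generated by (f(x)^{k+1} b(x), f(x)^k), for any b(x) ∈ A, never satisfies the closure condition: (f(x^{-1})^k, f(x^{-1})^{k+1} b(x^{-1})) ∉ C, where x^{-1} = x^{N-1} with N = 2^λ n. -/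
/-!
Since `f` is self-reciprocal and `x` is a unit of `A` (Frobenius turns `f ∣ x^n - 1` into
`f^(2^λ) ∣ x^N - 1`), `f(x⁻¹) = x^(-d) f(x)` is `f` times a unit. Membership in `C` would thus
give `f^k = f^(k+1) c` in `A`, i.e. `f^(2^λ) ∣ f^k (1 - f c)` in `F_2[x]`; cancelling `f^k`
leaves `f ∣ 1 - f c`, so `f` would be a unit.
-/

open Polynomial

theorem Polynomial.aeval_inv_mul_pow_natDegree_of_reverse_eq {R A : Type*} [CommSemiring R]
    [CommSemiring A] [Algebra R A] {p : R[X]} (hp : p.reverse = p) {x y : A} (hxy : x * y = 1) :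
    aeval y p * x ^ p.natDegree = aeval x p := by
  let _ : Invertible x := invertibleOfRightInverse x y hxy
  simpa only [hp, invOf_eq_right_inv hxy, aeval_def] using
    eval₂_reverse_mul_pow (algebraMap R A) x p

theorem Polynomial.pow_expChar_pow_dvd_X_pow_sub_one {R : Type*} [CommRing R] (p : ℕ)
    [ExpChar R p] {f : R[X]} {n : ℕ} (h : f ∣ X ^ n - 1) (l : ℕ) :
    f ^ p ^ l ∣ X ^ (p ^ l * n) - 1 := by
  rw [pow_mul', ← one_pow (p ^ l), ← sub_pow_expChar_pow]
  exact pow_dvd_pow_of_dvd h _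

theorem Ideal.Quotient.mk_pow_ne_mk_pow_succ_mul {R : Type*} [CommRing R] [IsDomain R]
    {f : R} (hf0 : f ≠ 0) (hf : ¬IsUnit f) {k m : ℕ} (hkm : k < m)
    (c : R ⧸ Ideal.span {f ^ m}) :
    Ideal.Quotient.mk _ f ^ k ≠ Ideal.Quotient.mk _ f ^ (k + 1) * c := by
  obtain ⟨c, rfl⟩ := Ideal.Quotient.mk_surjective c
  intro h
  have hdvd : f ^ k * f ^ (m - k) ∣ f ^ k * (1 - f * c) := by
    rw [← pow_add, Nat.add_sub_cancel' hkm.le, ← Ideal.mem_span_singleton,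
      ← Ideal.Quotient.eq_zero_iff_mem, map_mul, map_sub, map_mul, map_pow, map_one]
    linear_combination h
  have hfc : f ∣ 1 - f * c :=
    (dvd_pow_self f (by omega)).trans ((mul_dvd_mul_iff_left (pow_ne_zero k hf0)).mp hdvd)
  exact hf (isUnit_of_dvd_one (by simpa using hfc.add (dvd_mul_right f c)))

theorem Ideal.Quotient.aeval_mk_X {R : Type*} [CommRing R] (I : Ideal R[X]) (p : R[X]) :
    aeval (Ideal.Quotient.mk I X) p = Ideal.Quotient.mk I p := by
  simpa using aeval_algHom_apply (Ideal.Quotient.mkₐ R I) X p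

theorem stmt_18_general (n : ℕ) (hn0 : 0 < n) (f : Polynomial (ZMod 2))
    (hirr : Irreducible f)
    (hself : f.reverse = f) (hdvd : f ∣ X ^ n - 1)
    (l N k : ℕ) (hN : N = 2 ^ l * n) (hk : k ≤ 2 ^ l - 1)
    (b : Polynomial (ZMod 2)) :
    ¬ ∃ u : Polynomial (ZMod 2) ⧸ Ideal.span {f ^ 2 ^ l},
        u * Ideal.Quotient.mk (Ideal.span {f ^ 2 ^ l}) (f ^ (k + 1) * b)
            = (Polynomial.aeval ((Ideal.Quotient.mk (Ideal.span {f ^ 2 ^ l}) X) ^ (N - 1)) f) ^ k ∧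
        u * Ideal.Quotient.mk (Ideal.span {f ^ 2 ^ l}) (f ^ k)
            = (Polynomial.aeval ((Ideal.Quotient.mk (Ideal.span {f ^ 2 ^ l}) X) ^ (N - 1)) f) ^ (k + 1) *
              Polynomial.aeval ((Ideal.Quotient.mk (Ideal.span {f ^ 2 ^ l}) X) ^ (N - 1)) b := by
  rintro ⟨u, h, -⟩
  set mk := Ideal.Quotient.mk (Ideal.span {f ^ 2 ^ l})
  have hXN : mk X ^ N = 1 := by
    rw [← map_pow, ← map_one mk, Ideal.Quotient.eq, Ideal.mem_span_singleton, hN]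
    exact pow_expChar_pow_dvd_X_pow_sub_one 2 hdvd l
  have hXinv : mk X * mk X ^ (N - 1) = 1 := by
    rw [← pow_succ', Nat.sub_add_cancel (by rw [hN]; positivity : 0 < N), hXN]
  have hrev := aeval_inv_mul_pow_natDegree_of_reverse_eq hself hXinv
  rw [Ideal.Quotient.aeval_mk_X] at hrev
  refine Ideal.Quotient.mk_pow_ne_mk_pow_succ_mul hirr.ne_zero hirr.not_isUnit
    (Nat.lt_of_le_pred (Nat.two_pow_pos l) hk) (u * mk b * (mk X ^ f.natDegree) ^ k) ?_
  calc mk f ^ k = (aeval (mk X ^ (N - 1)) f * mk X ^ f.natDegree) ^ k := by rw [hrev]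
    _ = u * mk (f ^ (k + 1) * b) * (mk X ^ f.natDegree) ^ k := by rw [mul_pow, h]
    _ = mk f ^ (k + 1) * (u * mk b * (mk X ^ f.natDegree) ^ k) := by rw [map_mul, map_pow]; ring

/-- Let `f` be a self-reciprocal irreducible polynomial over `F_2` of even degree `d`
dividing `x^n - 1` (`n` odd), `λ ≥ 2`, `N = 2^λ n`, and `A = F_2[x]/⟨f^(2^λ)⟩`.  For
`1 ≤ k ≤ 2^λ - 1` and any `b`, the cyclic `A`-submodule of `A²` generated by
`(f^(k+1) b, f^k)` never contains `(f(x⁻¹)^k, f(x⁻¹)^(k+1) b(x⁻¹))`, where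
`x⁻¹ = x^(N-1)`. -/
theorem stmt_18 (n : ℕ) (hn : Odd n) (hn0 : 0 < n) (f : Polynomial (ZMod 2))
    (hirr : Irreducible f) (hd : 2 ≤ f.natDegree) (hdeven : Even f.natDegree)
    (hself : f.reverse = f) (hdvd : f ∣ X ^ n - 1)
    (l N k : ℕ) (hl : 2 ≤ l) (hN : N = 2 ^ l * n) (hk1 : 1 ≤ k) (hk : k ≤ 2 ^ l - 1)
    (b : Polynomial (ZMod 2)) :
    ¬ ∃ u : Polynomial (ZMod 2) ⧸ Ideal.span {f ^ 2 ^ l},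
        u * Ideal.Quotient.mk (Ideal.span {f ^ 2 ^ l}) (f ^ (k + 1) * b)
            = (Polynomial.aeval ((Ideal.Quotient.mk (Ideal.span {f ^ 2 ^ l}) X) ^ (N - 1)) f) ^ k ∧
        u * Ideal.Quotient.mk (Ideal.span {f ^ 2 ^ l}) (f ^ k)
            = (Polynomial.aeval ((Ideal.Quotient.mk (Ideal.span {f ^ 2 ^ l}) X) ^ (N - 1)) f) ^ (k + 1) *
              Polynomial.aeval ((Ideal.Quotient.mk (Ideal.span {f ^ 2 ^ l}) X) ^ (N - 1)) b :=
  stmt_18_general n hn0 f hirr hself hdvd l N k hN hk b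
end
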